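/- arXiv:1210.7781 — 9 statements merged into one kernel-verified Lean document; each statement's English description precedes it below -/
import Mathlib

section
/- Let g : ℝ → ℝ be twice differentiable with g(0)=0 and 0 < ℓ ≤ g'(x) ≤ L for all x. Let a, b > 0. Then the ODE u'(t) = a·exp(-g(u(t))) - b, u(0) = 0, has a unique solution u on [0,∞), and sup_{t≥0} |u(t)| ≤ |K| where K is the unique solution of a·exp(-g(K)) = b. Moreover if b = a then u(t) = 0 for all t ≥ 0. -/
open Real Set intervalIntegral


lemma ode_invariance (F : ℝ → ℝ) (m M : ℝ) (hm : m ≤ 0) (hM : 0 ≤ M)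
    (hpos : ∀ x, x < m → 0 < F x) (hneg : ∀ x, M < x → F x < 0)
    (v : ℝ → ℝ) (hv0 : v 0 = 0)
    (hv : ∀ t ∈ Ici (0:ℝ), HasDerivAt v (F (v t)) t) :
    ∀ t ∈ Ici (0:ℝ), v t ∈ Icc m M := by
  intro t ht
  simp only [mem_Ici] at ht
  constructor
  · by_contra h
    push_neg at h
    set S : Set ℝ := {s | s ∈ Icc 0 t ∧ m ≤ v s} with hS
    have hS0 : (0:ℝ) ∈ S := ⟨⟨le_refl _, ht⟩, by rw [hv0]; exact hm⟩
    have hbdd : BddAbove S := ⟨t, fun s hs => hs.1.2⟩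
    set s₀ := sSup S with hs₀
    have h0s₀ : (0:ℝ) ≤ s₀ := le_csSup hbdd hS0
    have hs₀t : s₀ ≤ t := csSup_le ⟨0, hS0⟩ fun s hs => hs.1.2
    have hvs₀ : m ≤ v s₀ := by
      have hcl : s₀ ∈ closure S := csSup_mem_closure ⟨0, hS0⟩ hbdd
      have hc : ContinuousWithinAt v S s₀ :=
        ((hv s₀ h0s₀).continuousAt).continuousWithinAt
      have := hc.mem_closure hcl (t := Ici m) (fun s hs => hs.2)
      rwa [isClosed_Ici.closure_eq] at this
    have hs₀lt : s₀ < t := by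
      rcases lt_or_eq_of_le hs₀t with h' | h'
      · exact h'
      · exact absurd (h' ▸ hvs₀) (not_le.2 h)
    have hkey : ∀ x ∈ Ioc s₀ t, v x < m := by
      intro x hx
      by_contra hc
      push_neg at hc
      exact absurd (le_csSup hbdd ⟨⟨le_trans h0s₀ hx.1.le, hx.2⟩, hc⟩) (not_le.2 hx.1)
    have hmono : StrictMonoOn v (Icc s₀ t) := by
      apply strictMonoOn_of_deriv_pos (convex_Icc _ _)
      · intro x hx
        exact ((hv x (le_trans h0s₀ hx.1)).continuousAt).continuousWithinAt
      · intro x hx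
        rw [interior_Icc] at hx
        rw [(hv x (le_trans h0s₀ hx.1.le)).deriv]
        exact hpos _ (hkey x ⟨hx.1, hx.2.le⟩)
    have := hmono ⟨le_refl _, hs₀lt.le⟩ ⟨hs₀lt.le, le_refl _⟩ hs₀lt
    exact absurd (lt_of_lt_of_le h (le_trans hvs₀ this.le)) (lt_irrefl _)
  · by_contra h
    push_neg at h
    set S : Set ℝ := {s | s ∈ Icc 0 t ∧ v s ≤ M} with hS
    have hS0 : (0:ℝ) ∈ S := ⟨⟨le_refl _, ht⟩, by rw [hv0]; exact hM⟩
    have hbdd : BddAbove S := ⟨t, fun s hs => hs.1.2⟩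
    set s₀ := sSup S with hs₀
    have h0s₀ : (0:ℝ) ≤ s₀ := le_csSup hbdd hS0
    have hs₀t : s₀ ≤ t := csSup_le ⟨0, hS0⟩ fun s hs => hs.1.2
    have hvs₀ : v s₀ ≤ M := by
      have hcl : s₀ ∈ closure S := csSup_mem_closure ⟨0, hS0⟩ hbdd
      have hc : ContinuousWithinAt v S s₀ :=
        ((hv s₀ h0s₀).continuousAt).continuousWithinAt
      have := hc.mem_closure hcl (t := Iic M) (fun s hs => hs.2)
      rwa [isClosed_Iic.closure_eq] at this
    have hs₀lt : s₀ < t := by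
      rcases lt_or_eq_of_le hs₀t with h' | h'
      · exact h'
      · exact absurd (h' ▸ hvs₀) (not_le.2 h)
    have hkey : ∀ x ∈ Ioc s₀ t, M < v x := by
      intro x hx
      by_contra hc
      push_neg at hc
      exact absurd (le_csSup hbdd ⟨⟨le_trans h0s₀ hx.1.le, hx.2⟩, hc⟩) (not_le.2 hx.1)
    have hanti : StrictAntiOn v (Icc s₀ t) := by
      apply strictAntiOn_of_deriv_neg (convex_Icc _ _)
      · intro x hx
        exact ((hv x (le_trans h0s₀ hx.1)).continuousAt).continuousWithinAt
      · intro x hx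
        rw [interior_Icc] at hx
        rw [(hv x (le_trans h0s₀ hx.1.le)).deriv]
        exact hneg _ (hkey x ⟨hx.1, hx.2.le⟩)
    have := hanti ⟨le_refl _, hs₀lt.le⟩ ⟨hs₀lt.le, le_refl _⟩ hs₀lt
    exact absurd (lt_of_le_of_lt (le_trans this.le hvs₀) h) (lt_irrefl _)


lemma ode_exists (F F' : ℝ → ℝ) (K₀ C : ℝ) (hK₀ : 0 < K₀) (hC : 0 < C)
    (hFd : ∀ x, HasDerivAt F (F' x) x)
    (hFpos : ∀ x, x < K₀ → 0 < F x)
    (hbd : ∀ s ∈ Icc 0 K₀, F s ≤ C * (K₀ - s)) :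
    ∃ u : ℝ → ℝ, u 0 = 0 ∧ (∀ t ∈ Ici (0:ℝ), HasDerivAt u (F (u t)) t) ∧
      ∀ t ∈ Ici (0:ℝ), u t ∈ Ico 0 K₀ := by
  have hFc : Continuous F := by
    rw [continuous_iff_continuousAt]; exact fun x => (hFd x).continuousAt
  set h : ℝ → ℝ := fun s => (F s)⁻¹ with hh
  have hcontAt : ∀ x < K₀, ContinuousAt h x := fun x hx =>
    hFc.continuousAt.inv₀ (hFpos x hx).ne'
  have hconton : ∀ s ⊆ Iio K₀, ContinuousOn h s := fun s hs x hx =>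
    (hcontAt x (hs hx)).continuousWithinAt
  have hint : ∀ x < K₀, ∀ y < K₀, IntervalIntegrable h MeasureTheory.volume x y := by
    intro x hx y hy
    apply ContinuousOn.intervalIntegrable
    apply hconton
    intro s hs
    rcases le_total x y with hxy | hxy
    · rw [uIcc_of_le hxy] at hs; exact lt_of_le_of_lt hs.2 hy
    · rw [uIcc_of_ge hxy] at hs; exact lt_of_le_of_lt hs.2 hx
  set H : ℝ → ℝ := fun x => ∫ s in (0:ℝ)..x, h s with hHdef
  have hH0 : H 0 = 0 := integral_same
  have hHd : ∀ x < K₀, HasDerivAt H (h x) x := by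
    intro x hx
    apply integral_hasDerivAt_right (hint 0 hK₀ x hx)
    · exact ⟨Iio K₀, Iio_mem_nhds hx,
        ((hconton _ (subset_refl _)).aestronglyMeasurable measurableSet_Iio)⟩
    · exact hcontAt x hx
  have hHcont : ∀ s ⊆ Iio K₀, ContinuousOn H s := fun s hs x hx =>
    ((hHd x (hs hx)).continuousAt).continuousWithinAt
  have hHmono : StrictMonoOn H (Iio K₀) := by
    apply strictMonoOn_of_deriv_pos (convex_Iio _) (hHcont _ (subset_refl _))
    intro x hx
    rw [interior_Iio] at hx
    rw [(hHd x hx).deriv]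
    exact inv_pos.2 (hFpos x hx)
  -- surjectivity onto (H (-1), ∞)
  have hm1 : (-1:ℝ) < K₀ := by linarith
  have hHm1 : H (-1) < 0 := by
    have := hHmono (mem_Iio.2 hm1) (mem_Iio.2 hK₀) (by norm_num)
    rwa [hH0] at this
  have hsurj : ∀ t, H (-1) < t → ∃ x, x ∈ Ioo (-1:ℝ) K₀ ∧ H x = t := by
    intro t htm
    set T := max t 0 with hT
    have hT0 : 0 ≤ T := le_max_right _ _
    set x₁ : ℝ := K₀ - K₀ * Real.exp (-(C * T + 1)) with hx₁
    have hexp1 : Real.exp (-(C * T + 1)) < 1 := by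
      rw [Real.exp_lt_one_iff]
      nlinarith [mul_nonneg hC.le hT0]
    have hexp0 : 0 < Real.exp (-(C * T + 1)) := Real.exp_pos _
    have hx₁0 : 0 < x₁ := by nlinarith
    have hx₁K : x₁ < K₀ := by nlinarith
    have hK₀x₁ : K₀ - x₁ = K₀ * Real.exp (-(C * T + 1)) := by ring
    -- lower bound for H x₁
    have hlow : ∀ s ∈ Icc (0:ℝ) x₁, (C * (K₀ - s))⁻¹ ≤ h s := by
      intro s hs
      have hsK : s < K₀ := lt_of_le_of_lt hs.2 hx₁K
      exact inv_anti₀ (hFpos s hsK) (hbd s ⟨hs.1, hsK.le⟩)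
    have hcont2 : ContinuousOn (fun s : ℝ => (C * (K₀ - s))⁻¹) (Icc 0 x₁) := by
      apply ContinuousOn.inv₀
      · fun_prop
      · intro s hs
        have h2 : 0 < K₀ - s := by
          have : s < K₀ := lt_of_le_of_lt hs.2 hx₁K
          linarith
        positivity
    have hint2 : IntervalIntegrable (fun s : ℝ => (C * (K₀ - s))⁻¹)
        MeasureTheory.volume 0 x₁ := by
      apply ContinuousOn.intervalIntegrable
      rwa [uIcc_of_le hx₁0.le]
    have hval : (∫ s in (0:ℝ)..x₁, (C * (K₀ - s))⁻¹) =
        C⁻¹ * Real.log K₀ - C⁻¹ * Real.log (K₀ - x₁) := by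
      have : ∀ s ∈ uIcc (0:ℝ) x₁,
          HasDerivAt (fun y => -(C⁻¹ * Real.log (K₀ - y))) ((C * (K₀ - s))⁻¹) s := by
        intro s hs
        rw [uIcc_of_le hx₁0.le] at hs
        have hsK : K₀ - s > 0 := by
          have : s < K₀ := lt_of_le_of_lt hs.2 hx₁K
          linarith
        have h1 : HasDerivAt (fun y : ℝ => K₀ - y) (-1) s := by
          simpa using (hasDerivAt_id s).const_sub K₀
        have h2 : HasDerivAt (fun y => Real.log (K₀ - y)) ((K₀ - s)⁻¹ * (-1)) s :=
          (Real.hasDerivAt_log hsK.ne').comp s h1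
        have h3 := ((h2.const_mul C⁻¹).neg)
        have h4 : (C * (K₀ - s))⁻¹ = -(C⁻¹ * ((K₀ - s)⁻¹ * -1)) := by rw [mul_inv]; ring
        rw [h4]; exact h3
      rw [integral_eq_sub_of_hasDerivAt this hint2]
      ring
    have hge : T + C⁻¹ ≤ H x₁ := by
      have hmono2 := integral_mono_on hx₁0.le hint2 (hint 0 hK₀ x₁ hx₁K) hlow
      have hlog : Real.log (K₀ - x₁) = Real.log K₀ + (-(C * T + 1)) := by
        rw [hK₀x₁, Real.log_mul (ne_of_gt hK₀) hexp0.ne', Real.log_exp]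
      rw [hval, hlog] at hmono2
      calc T + C⁻¹ = C⁻¹ * Real.log K₀ - C⁻¹ * (Real.log K₀ + -(C * T + 1)) := by
            field_simp; ring
        _ ≤ H x₁ := hmono2
    have hineq : t ≤ H x₁ := by
      have : t ≤ T := le_max_left _ _
      have hCi : 0 < C⁻¹ := inv_pos.2 hC
      linarith
    -- IVT on [-1, x₁]
    have hIVT := intermediate_value_Icc (by linarith : (-1:ℝ) ≤ x₁)
      (hHcont _ (fun s hs => lt_of_le_of_lt hs.2 hx₁K))
    have htmem : t ∈ Icc (H (-1)) (H x₁) := ⟨htm.le, hineq⟩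
    obtain ⟨x, hxmem, hxval⟩ := hIVT htmem
    refine ⟨x, ⟨?_, lt_of_le_of_lt hxmem.2 hx₁K⟩, hxval⟩
    rcases lt_or_eq_of_le hxmem.1 with h' | h'
    · exact h'
    · exfalso; rw [← hxval, ← h'] at htm; exact lt_irrefl _ htm
  -- define u
  set u : ℝ → ℝ := fun t => if ht : H (-1) < t then (hsurj t ht).choose else 0 with hu
  have huspec : ∀ t, (htm : H (-1) < t) →
      u t ∈ Ioo (-1:ℝ) K₀ ∧ H (u t) = t := by
    intro t htm
    have := (hsurj t htm).choose_spec
    rw [hu]; simp only [dif_pos htm]; exact this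
  have hu0 : u 0 = 0 := by
    have h1 := huspec 0 hHm1
    have : u 0 ∈ Iio K₀ := h1.1.2
    exact hHmono.injOn this (mem_Iio.2 hK₀) (by rw [h1.2, hH0])
  have humem : ∀ t, 0 ≤ t → u t ∈ Ico 0 K₀ := by
    intro t ht
    have htm : H (-1) < t := lt_of_lt_of_le hHm1 ht
    obtain ⟨hmem, hval⟩ := huspec t htm
    refine ⟨?_, hmem.2⟩
    by_contra hc
    push_neg at hc
    have := hHmono (mem_Iio.2 (lt_trans hc hK₀)) (mem_Iio.2 hK₀) hc
    rw [hval, hH0] at this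
    exact absurd (lt_of_le_of_lt ht this) (lt_irrefl _)
  have humono : StrictMonoOn u (Ioi (H (-1))) := by
    intro t₁ ht₁ t₂ ht₂ h12
    by_contra hc
    push_neg at hc
    have h1 := huspec t₁ ht₁
    have h2 := huspec t₂ ht₂
    have := hHmono.monotoneOn (mem_Iio.2 h2.1.2) (mem_Iio.2 h1.1.2) hc
    rw [h1.2, h2.2] at this
    exact absurd h12 (not_lt.2 this)
  have himg : Ioo (-1:ℝ) K₀ ⊆ u '' (Ioi (H (-1))) := by
    intro x hx
    have hxH : H (-1) < H x := hHmono (mem_Iio.2 hm1) (mem_Iio.2 hx.2) hx.1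
    refine ⟨H x, hxH, ?_⟩
    have := huspec (H x) hxH
    exact hHmono.injOn this.1.2 (mem_Iio.2 hx.2) this.2
  refine ⟨u, hu0, ?_, fun t ht => humem t ht⟩
  intro t ht
  simp only [mem_Ici] at ht
  have htm : H (-1) < t := lt_of_lt_of_le hHm1 ht
  obtain ⟨hmem, hval⟩ := huspec t htm
  have hcontu : ContinuousAt u t := by
    apply humono.continuousAt_of_image_mem_nhds (Ioi_mem_nhds htm)
    exact Filter.mem_of_superset (isOpen_Ioo.mem_nhds hmem) himg
  have hder := HasDerivAt.of_local_left_inverse hcontu (hHd (u t) hmem.2)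
    (inv_ne_zero (hFpos _ hmem.2).ne')
    (Filter.eventually_of_mem (Ioi_mem_nhds htm) fun y hy => (huspec y hy).2)
  rwa [inv_inv] at hder

lemma ode_master (F F' : ℝ → ℝ) (K : ℝ)
    (hFd : ∀ x, HasDerivAt F (F' x) x)
    (hF'c : Continuous F')
    (hF'neg : ∀ x, F' x < 0)
    (hFK : F K = 0) :
    ∃ u : ℝ → ℝ, (u 0 = 0 ∧ ∀ t ∈ Ici (0:ℝ), HasDerivAt u (F (u t)) t) ∧
      (∀ v : ℝ → ℝ, (v 0 = 0 ∧ ∀ t ∈ Ici (0:ℝ), HasDerivAt v (F (v t)) t) →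
        ∀ t ∈ Ici (0:ℝ), v t = u t) ∧
      (∀ t ∈ Ici (0:ℝ), |u t| ≤ |K|) ∧
      (F 0 = 0 → ∀ t ∈ Ici (0:ℝ), u t = 0) := by
  have hanti : StrictAnti F := strictAnti_of_deriv_neg fun x => by
    rw [(hFd x).deriv]; exact hF'neg x
  have hposlt : ∀ x, x < K → 0 < F x := fun x hx => by
    have := hanti hx; rwa [hFK] at this
  have hneggt : ∀ x, K < x → F x < 0 := fun x hx => by
    have := hanti hx; rwa [hFK] at this
  set m := min K 0 with hm
  set M := max K 0 with hM
  have hm0 : m ≤ 0 := min_le_right _ _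
  have hM0 : 0 ≤ M := le_max_right _ _
  have hpos : ∀ x, x < m → 0 < F x := fun x hx =>
    hposlt x (lt_of_lt_of_le hx (min_le_left _ _))
  have hneg : ∀ x, M < x → F x < 0 := fun x hx =>
    hneggt x (lt_of_le_of_lt (le_max_left _ _) hx)
  have hInv := fun v hv0 hv => ode_invariance F m M hm0 hM0 hpos hneg v hv0 hv
  -- Lipschitz constant on Icc m M
  obtain ⟨C₀, hC₀⟩ := isCompact_Icc.exists_bound_of_continuousOn
    (s := Icc m M) hF'c.continuousOn
  set C : NNReal := Real.toNNReal (max C₀ 0) with hC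
  have hlip : LipschitzOnWith C F (Icc m M) := by
    apply Convex.lipschitzOnWith_of_nnnorm_hasDerivWithin_le (convex_Icc _ _)
      (f' := F') (fun x hx => (hFd x).hasDerivWithinAt)
    intro x hx
    rw [← NNReal.coe_le_coe, coe_nnnorm, hC, Real.coe_toNNReal _ (le_max_right _ _)]
    exact le_trans (hC₀ x hx) (le_max_left _ _)
  -- uniqueness given two solutions
  have huniq : ∀ w v : ℝ → ℝ, w 0 = 0 → (∀ t ∈ Ici (0:ℝ), HasDerivAt w (F (w t)) t) →
      v 0 = 0 → (∀ t ∈ Ici (0:ℝ), HasDerivAt v (F (v t)) t) →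
      ∀ t ∈ Ici (0:ℝ), v t = w t := by
    intro w v hw0 hwd hv0 hvd t ht
    simp only [mem_Ici] at ht
    have hvm := hInv v hv0 hvd
    have hwm := hInv w hw0 hwd
    have := ODE_solution_unique_of_mem_Icc_right
      (v := fun _ x => F x) (s := fun _ => Icc m M) (K := C)
      (fun _ _ => hlip)
      (f := v) (g := w) (a := 0) (b := t)
      (fun x hx => ((hvd x hx.1).continuousAt).continuousWithinAt)
      (fun x hx => (hvd x hx.1).hasDerivWithinAt)
      (fun x hx => hvm x hx.1)
      (fun x hx => ((hwd x hx.1).continuousAt).continuousWithinAt)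
      (fun x hx => (hwd x hx.1).hasDerivWithinAt)
      (fun x hx => hwm x hx.1)
      (by rw [hv0, hw0])
    exact this ⟨ht, le_refl t⟩
  -- existence
  obtain ⟨u, hu0, hud⟩ : ∃ u : ℝ → ℝ, u 0 = 0 ∧
      ∀ t ∈ Ici (0:ℝ), HasDerivAt u (F (u t)) t := by
    rcases lt_trichotomy K 0 with hK0 | hK0 | hK0
    · -- K < 0 : reflect
      set G : ℝ → ℝ := fun x => -F (-x) with hG
      set G' : ℝ → ℝ := fun x => F' (-x) with hG'
      have hGd : ∀ x, HasDerivAt G (G' x) x := by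
        intro x
        have h1 : HasDerivAt (fun y : ℝ => F (-y)) (F' (-x) * (-1)) x :=
          (hFd (-x)).comp x (hasDerivAt_neg x)
        exact (by simpa using h1.neg : HasDerivAt (-fun y => F (-y)) (F' (-x)) x)
      have hGpos : ∀ x, x < -K → 0 < G x := by
        intro x hx
        exact neg_pos.2 (hneggt (-x) (by linarith))
      obtain ⟨C₁, hC₁⟩ := isCompact_Icc.exists_bound_of_continuousOn
        (s := Icc (0:ℝ) (-K)) ((hF'c.comp continuous_neg).continuousOn (s := Icc 0 (-K)))
      set C₂ : ℝ := max C₁ 1 with hC₂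
      have hC₂0 : 0 < C₂ := lt_of_lt_of_le one_pos (le_max_right _ _)
      have hGK : G (-K) = 0 := by simp [hG, hFK]
      have hbd : ∀ s ∈ Icc (0:ℝ) (-K), G s ≤ C₂ * (-K - s) := by
        intro s hs
        have hmvt := Convex.norm_image_sub_le_of_norm_hasDerivWithin_le
          (s := Icc (0:ℝ) (-K)) (f := G) (f' := G') (C := C₂)
          (fun x hx => (hGd x).hasDerivWithinAt)
          (fun x hx => le_trans (hC₁ x hx) (le_max_left _ _))
          (convex_Icc _ _) hs ⟨by linarith, le_refl _⟩
        rw [hGK] at hmvt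
        have h1 : ‖(0:ℝ) - G s‖ = |G s| := by rw [zero_sub, norm_neg, Real.norm_eq_abs]
        have h2 : ‖-K - s‖ = -K - s := by
          rw [Real.norm_eq_abs, abs_of_nonneg (by linarith [hs.2])]
        rw [h1, h2] at hmvt
        exact le_trans (le_abs_self _) hmvt
      obtain ⟨w, hw0, hwd, hwm⟩ := ode_exists G G' (-K) C₂ (by linarith) hC₂0 hGd hGpos hbd
      refine ⟨fun t => -w t, by simp [hw0], ?_⟩
      intro t ht
      have := (hwd t ht).neg
      have heq : -G (w t) = F (-w t) := by simp [hG]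
      rwa [heq] at this
    · -- K = 0
      refine ⟨fun _ => 0, rfl, ?_⟩
      intro t _
      rw [hK0] at hFK
      rw [hFK]
      exact hasDerivAt_const t 0
    · -- K > 0
      obtain ⟨C₁, hC₁⟩ := isCompact_Icc.exists_bound_of_continuousOn
        (s := Icc (0:ℝ) K) hF'c.continuousOn
      set C₂ : ℝ := max C₁ 1 with hC₂
      have hC₂0 : 0 < C₂ := lt_of_lt_of_le one_pos (le_max_right _ _)
      have hbd : ∀ s ∈ Icc (0:ℝ) K, F s ≤ C₂ * (K - s) := by
        intro s hs
        have hmvt := Convex.norm_image_sub_le_of_norm_hasDerivWithin_le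
          (s := Icc (0:ℝ) K) (f := F) (f' := F') (C := C₂)
          (fun x hx => (hFd x).hasDerivWithinAt)
          (fun x hx => le_trans (hC₁ x hx) (le_max_left _ _))
          (convex_Icc _ _) hs ⟨hK0.le, le_refl _⟩
        rw [hFK] at hmvt
        have h1 : ‖(0:ℝ) - F s‖ = |F s| := by rw [zero_sub, norm_neg, Real.norm_eq_abs]
        have h2 : ‖K - s‖ = K - s := by
          rw [Real.norm_eq_abs, abs_of_nonneg (by linarith [hs.2])]
        rw [h1, h2] at hmvt
        exact le_trans (le_abs_self _) hmvt
      obtain ⟨w, hw0, hwd, hwm⟩ := ode_exists F F' K C₂ hK0 hC₂0 hFd hposlt hbd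
      exact ⟨w, hw0, hwd⟩
  refine ⟨u, ⟨hu0, hud⟩, fun v hv => huniq u v hu0 hud hv.1 hv.2, ?_, ?_⟩
  · intro t ht
    have := hInv u hu0 hud t ht
    rw [abs_le]
    constructor
    · exact le_trans (le_min (neg_abs_le K) (by simp [abs_nonneg])) this.1
    · exact le_trans this.2 (max_le (le_abs_self K) (abs_nonneg K))
  · intro hF0 t ht
    have hK0 : K = 0 := hanti.injective (hFK.trans hF0.symm)
    have := hInv u hu0 hud t ht
    rw [hm, hM, hK0] at this
    simp only [min_self, max_self, Icc_self, mem_singleton_iff] at this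
    simpa using this

theorem stmt_3 (g g' g'' : ℝ → ℝ) (ℓ L a b K : ℝ)
    (hg0 : g 0 = 0)
    (hg' : ∀ x, HasDerivAt g (g' x) x)
    (hg'' : ∀ x, HasDerivAt g' (g'' x) x)
    (hℓ : 0 < ℓ) (hlow : ∀ x, ℓ ≤ g' x) (hup : ∀ x, g' x ≤ L)
    (hg''bd : ∀ x, |g'' x| ≤ L)
    (ha : 0 < a) (hb : 0 < b)
    (hK : a * exp (-g K) = b) :
    ∃ u : ℝ → ℝ,
      (u 0 = 0 ∧ ∀ t ∈ Ici (0:ℝ), HasDerivAt u (a * exp (-g (u t)) - b) t) ∧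
      (∀ v : ℝ → ℝ,
        (v 0 = 0 ∧ ∀ t ∈ Ici (0:ℝ), HasDerivAt v (a * exp (-g (v t)) - b) t) →
        ∀ t ∈ Ici (0:ℝ), v t = u t) ∧
      (∀ t ∈ Ici (0:ℝ), |u t| ≤ |K|) ∧
      (b = a → ∀ t ∈ Ici (0:ℝ), u t = 0) := by
  have hgc : Continuous g := continuous_iff_continuousAt.2 fun x => (hg' x).continuousAt
  have hg'c : Continuous g' := continuous_iff_continuousAt.2 fun x => (hg'' x).continuousAt
  have hFd : ∀ x, HasDerivAt (fun x => a * exp (-g x) - b)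
      (a * (exp (-g x) * -(g' x))) x := fun x =>
    (((hg' x).neg.exp).const_mul a).sub_const b
  have hF'c : Continuous (fun x => a * (exp (-g x) * -(g' x))) :=
    continuous_const.mul ((Real.continuous_exp.comp hgc.neg).mul hg'c.neg)
  have hF'neg : ∀ x, a * (exp (-g x) * -(g' x)) < 0 := by
    intro x
    have h1 : 0 < g' x := lt_of_lt_of_le hℓ (hlow x)
    have h2 : 0 < Real.exp (-g x) := Real.exp_pos _
    nlinarith [mul_pos ha (mul_pos h2 h1)]
  have hFK : a * exp (-g K) - b = 0 := sub_eq_zero_of_eq hK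
  obtain ⟨u, h1, h2, h3, h4⟩ := ode_master (fun x => a * exp (-g x) - b)
    (fun x => a * (exp (-g x) * -(g' x))) K hFd hF'c hF'neg hFK
  refine ⟨u, h1, h2, h3, fun hba => h4 ?_⟩
  show a * exp (-g 0) - b = 0
  rw [hg0, neg_zero, Real.exp_zero, mul_one, hba, sub_self]
end

section
/- Under Assumption 1 on g, the function U(t) = u(t) + bt, where u solves u' = a·exp(-g(u)) - b with u(0)=0, is the unique solution of U'(t) = a·f(t,U(t)), U(0)=0, with f(t,y) = exp(-g(y - bt)), and satisfies sup_{t≥0} |U(t) - bt| < ∞. -/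
open Real Set

lemma key_sq (v v' : ℝ → ℝ)
    (hv : ∀ t ∈ Ici (0:ℝ), HasDerivAt v (v' t) t)
    (hsign : ∀ t ∈ Ici (0:ℝ), v t * v' t ≤ 0) :
    ∀ t ∈ Ici (0:ℝ), (v t)^2 ≤ (v 0)^2 := by
  have hanti : AntitoneOn (fun t => (v t)^2) (Ici (0:ℝ)) := by
    apply antitoneOn_of_deriv_nonpos (convex_Ici 0)
    · intro t ht
      exact (((hv t ht).pow 2).continuousAt).continuousWithinAt
    · intro t ht
      rw [interior_Ici] at ht
      exact (((hv t (mem_Ici.mpr (le_of_lt (mem_Ioi.mp ht)))).pow 2)).differentiableAt.differentiableWithinAt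
    · intro t ht
      rw [interior_Ici] at ht
      have := ((hv t (mem_Ici.mpr (le_of_lt (mem_Ioi.mp ht)))).pow 2).deriv
      rw [show (fun t => v t ^ 2) = v ^ 2 from rfl, this]
      have := hsign t (mem_Ici.mpr (le_of_lt (mem_Ioi.mp ht)))
      push_cast
      nlinarith
  intro t ht
  exact hanti (self_mem_Ici) ht ht

/-- Sign lemma: for monotone g, (x-y)(a e^{-g x} - a e^{-g y}) ≤ 0. -/
lemma sign_lem (g : ℝ → ℝ) (hg : Monotone g) (a : ℝ) (ha : 0 ≤ a) (x y : ℝ) :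
    (x - y) * (a * exp (-g x) - a * exp (-g y)) ≤ 0 := by
  rcases le_total x y with h | h
  · apply mul_nonpos_of_nonpos_of_nonneg (by linarith)
    have : exp (-g x) ≥ exp (-g y) := exp_le_exp.mpr (by simpa using hg h)
    nlinarith
  · apply mul_nonpos_of_nonneg_of_nonpos (by linarith)
    have : exp (-g y) ≥ exp (-g x) := exp_le_exp.mpr (by simpa using hg h)
    nlinarith

theorem stmt_4 (g g' g'' : ℝ → ℝ) (ℓ L a b : ℝ)
    (hg0 : g 0 = 0)
    (hg' : ∀ x, HasDerivAt g (g' x) x)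
    (hg'' : ∀ x, HasDerivAt g' (g'' x) x)
    (hℓ : 0 < ℓ) (hlow : ∀ x, ℓ ≤ g' x) (hup : ∀ x, g' x ≤ L)
    (hg''bd : ∀ x, |g'' x| ≤ L)
    (ha : 0 < a) (hb : 0 < b)
    (f : ℝ → ℝ → ℝ) (hf : ∀ t y, f t y = exp (-g (y - b * t)))
    (u : ℝ → ℝ)
    (hu0 : u 0 = 0)
    (hude : ∀ t ∈ Ici (0:ℝ), HasDerivAt u (a * exp (-g (u t)) - b) t)
    (U : ℝ → ℝ) (hU : ∀ t, U t = u t + b * t) :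
    (U 0 = 0 ∧ ∀ t ∈ Ici (0:ℝ), HasDerivAt U (a * f t (U t)) t) ∧
    (∀ W : ℝ → ℝ,
      (W 0 = 0 ∧ ∀ t ∈ Ici (0:ℝ), HasDerivAt W (a * f t (W t)) t) →
      ∀ t ∈ Ici (0:ℝ), W t = U t) ∧
    (∃ M : ℝ, ∀ t ∈ Ici (0:ℝ), |U t - b * t| ≤ M) := by
  have hUfun : U = fun t => u t + b * t := funext hU
  have hgmono : Monotone g := by
    apply monotone_of_deriv_nonneg (fun x => (hg' x).differentiableAt)
    intro x
    rw [(hg' x).deriv]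
    linarith [hlow x]
  -- Part 1
  have hU0 : U 0 = 0 := by rw [hU 0, hu0]; ring
  have hUde : ∀ t ∈ Ici (0:ℝ), HasDerivAt U (a * f t (U t)) t := by
    intro t ht
    have h1 : HasDerivAt U ((a * exp (-g (u t)) - b) + b * 1) t := by
      rw [hUfun]
      exact (hude t ht).add ((hasDerivAt_id t).const_mul b)
    have : a * f t (U t) = (a * exp (-g (u t)) - b) + b * 1 := by
      rw [hf, hU]; ring_nf
    rw [this]; exact h1
  refine ⟨⟨hU0, hUde⟩, ?_, ?_⟩
  -- Part 2: uniqueness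
  · rintro W ⟨hW0, hWde⟩ t ht
    have hv : ∀ s ∈ Ici (0:ℝ), HasDerivAt (fun r => W r - U r)
        (a * f s (W s) - a * f s (U s)) s := fun s hs => (hWde s hs).sub (hUde s hs)
    have hsq := key_sq (fun r => W r - U r) (fun s => a * f s (W s) - a * f s (U s)) hv
      (by
        intro s hs
        have := sign_lem (fun y => g (y - b * s)) (fun x y hxy => hgmono (by linarith))
          a (le_of_lt ha) (W s) (U s)
        simpa [hf] using this)
      t ht
    have hsq' : (W t - U t)^2 ≤ (W 0 - U 0)^2 := hsq
    rw [hW0, hU0] at hsq'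
    have : (W t - U t)^2 ≤ 0 := by simpa using hsq' 
    nlinarith [sq_nonneg (W t - U t)]
  -- Part 3: boundedness
  · -- g is surjective
    have hsurj : ∃ c, g c = Real.log (a / b) := by
      have hmono2 : Monotone (fun x => g x - ℓ * x) := by
        have hd : ∀ x : ℝ, HasDerivAt (fun x => g x - ℓ * x) (g' x - ℓ * 1) x :=
          fun x => (hg' x).sub ((hasDerivAt_id x).const_mul ℓ)
        apply monotone_of_deriv_nonneg (fun x => (hd x).differentiableAt)
        intro x
        rw [(hd x).deriv]
        simp only [mul_one]
        linarith [hlow x]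
      have hge : ∀ x ≥ (0:ℝ), ℓ * x ≤ g x := by
        intro x hx
        have := hmono2 hx
        simp only [hg0] at this
        linarith
      have hle : ∀ x ≤ (0:ℝ), g x ≤ ℓ * x := by
        intro x hx
        have := hmono2 hx
        simp only [hg0] at this
        linarith
      have htop : Filter.Tendsto g Filter.atTop Filter.atTop := by
        apply Filter.tendsto_atTop_mono' _ _ (Filter.tendsto_id.const_mul_atTop hℓ)
        filter_upwards [Filter.eventually_ge_atTop (0:ℝ)] with x hx using hge x hx
      have hbot : Filter.Tendsto g Filter.atBot Filter.atBot := by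
        apply Filter.tendsto_atBot_mono' _ _ (Filter.tendsto_id.const_mul_atBot hℓ)
        filter_upwards [Filter.eventually_le_atBot (0:ℝ)] with x hx using hle x hx
      have hcont : Continuous g :=
        (Differentiable.continuous (fun x => (hg' x).differentiableAt))
      exact hcont.surjective htop hbot _
    obtain ⟨c, hc⟩ := hsurj
    have hbeq : a * exp (-g c) = b := by
      rw [hc, ← Real.log_inv, Real.exp_log (by positivity)]
      field_simp
    have hv : ∀ s ∈ Ici (0:ℝ), HasDerivAt (fun r => u r - c)
        (a * exp (-g (u s)) - a * exp (-g c)) s := by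
      intro s hs
      have := (hude s hs).sub_const c
      rwa [hbeq]
    have hsq := key_sq (fun r => u r - c) (fun s => a * exp (-g (u s)) - a * exp (-g c)) hv
      (by
        intro s hs
        exact sign_lem g hgmono a (le_of_lt ha) (u s) c)
      -- gives (u t - c)^2 ≤ (u 0 - c)^2 = c^2
    refine ⟨2 * |c|, ?_⟩
    intro t ht
    have h1 : (u t - c)^2 ≤ (u 0 - c)^2 := hsq t ht
    rw [hu0] at h1
    have h2 : |u t - c| ≤ |c| := by
      rw [← Real.sqrt_sq_eq_abs, ← Real.sqrt_sq_eq_abs]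
      apply Real.sqrt_le_sqrt
      nlinarith
    have : U t - b * t = u t := by rw [hU]; ring
    rw [this]
    calc |u t| = |(u t - c) + c| := by ring_nf
    _ ≤ |u t - c| + |c| := abs_add_le _ _
    _ ≤ 2 * |c| := by linarith
end

section
/- Let β ∈ (2,3), θ > 0, 0 < h ≤ 1, h ≤ t < ∞, and define ϑ(r,s) = r∧(t+h-s)₊ - r∧(t-s)₊. There is a constant C depending only on β and θ such that n^{-4(α-1)} ∫₀^{t+h} ∫₀^∞ ϑ(r,s)⁴ n^{α+1}(nθr+1)^{-β} dr ds ≤ C n^{5-β-3α} h^{6-β} for all n ≥ 1. -/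
open Real Set MeasureTheory

lemma tail_int (β m : ℝ) (hβ : 1 < β) (hm : 0 < m) :
    IntegrableOn (fun r : ℝ => r ^ (-β)) (Ioi m) ∧
      ∫ r in Ioi m, r ^ (-β) = m ^ (1 - β) / (β - 1) := by
  have h1 : -β < -1 := by linarith
  refine ⟨integrableOn_Ioi_rpow_of_lt h1 hm, ?_⟩
  rw [integral_Ioi_rpow_of_lt h1 hm, show -β + 1 = 1 - β by ring]
  have hne : β - 1 ≠ 0 := by linarith
  have hne2 : (1 : ℝ) - β ≠ 0 := by linarith
  field_simp
  ring

lemma caseA (β h : ℝ) (hβ2 : 2 < β) (hβ3 : β < 3) (hh : 0 < h) :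
    IntegrableOn (fun r : ℝ => (min r h) ^ 4 * r ^ (-β)) (Ioi 0) ∧
      ∫ r in Ioi (0:ℝ), (min r h) ^ 4 * r ^ (-β)
        ≤ ((5 - β)⁻¹ + (β - 1)⁻¹) * h ^ 4 * h ^ (1 - β) := by
  have hγ : (-1:ℝ) < 4 - β := by linarith
  have e1 : EqOn (fun r : ℝ => r ^ (4 - β)) (fun r : ℝ => (min r h) ^ 4 * r ^ (-β)) (Ioc 0 h) := by
    intro r hr
    simp only [min_eq_left hr.2]
    rw [← Real.rpow_natCast r 4, ← Real.rpow_add hr.1,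
      show ((4:ℕ):ℝ) + -β = 4 - β by push_cast; ring]
  have e2 : EqOn (fun r : ℝ => h ^ 4 * r ^ (-β)) (fun r : ℝ => (min r h) ^ 4 * r ^ (-β)) (Ioi h) := by
    intro r hr
    simp only [min_eq_right (le_of_lt (mem_Ioi.mp hr))]
  have I1 : IntegrableOn (fun r : ℝ => (min r h) ^ 4 * r ^ (-β)) (Ioc 0 h) := by
    have := (intervalIntegral.intervalIntegrable_rpow' (a := 0) (b := h) hγ).1
    exact this.congr_fun e1 measurableSet_Ioc
  have I2 : IntegrableOn (fun r : ℝ => (min r h) ^ 4 * r ^ (-β)) (Ioi h) := by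
    have := ((tail_int β h (by linarith) hh).1.const_mul (h ^ 4))
    exact IntegrableOn.congr_fun this e2 measurableSet_Ioi
  have hsplit : Ioc (0:ℝ) h ∪ Ioi h = Ioi 0 := Ioc_union_Ioi_eq_Ioi hh.le
  constructor
  · rw [← hsplit]; exact I1.union I2
  · rw [← hsplit, setIntegral_union (Ioc_disjoint_Ioi le_rfl) measurableSet_Ioi I1 I2]
    have v1 : ∫ r in Ioc (0:ℝ) h, (min r h) ^ 4 * r ^ (-β) = h ^ (5 - β) / (5 - β) := by
      rw [← setIntegral_congr_fun measurableSet_Ioc e1, ← intervalIntegral.integral_of_le hh.le,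
        integral_rpow (Or.inl hγ),
        Real.zero_rpow (by norm_num; linarith : (4:ℝ) - β + 1 ≠ 0), sub_zero,
        show (4:ℝ) - β + 1 = 5 - β by ring]
    have v2 : ∫ r in Ioi h, (min r h) ^ 4 * r ^ (-β) = h ^ 4 * (h ^ (1 - β) / (β - 1)) := by
      rw [← setIntegral_congr_fun measurableSet_Ioi e2, integral_const_mul,
        (tail_int β h (by linarith) hh).2]
    rw [v1, v2]
    have hpow : h ^ (5 - β) = h ^ 4 * h ^ (1 - β) := by
      rw [← Real.rpow_natCast h 4, ← Real.rpow_add hh,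
        show ((4:ℕ):ℝ) + (1 - β) = 5 - β by push_cast; ring]
    rw [hpow]
    have h5 : (5:ℝ) - β ≠ 0 := by linarith
    have h1 : β - 1 ≠ 0 := by linarith
    rw [div_eq_inv_mul, div_eq_inv_mul]
    ring_nf
    exact le_refl _

lemma aux_div (d X Y : ℝ) (hd : 0 < d) (hX : 0 ≤ X) : (X - Y) / (-d) ≤ d⁻¹ * Y := by
  have h1 : (X - Y) / (-d) = (Y - X) / d := by
    rw [div_neg, neg_div', neg_sub]
  rw [h1, div_eq_inv_mul]
  exact mul_le_mul_of_nonneg_left (by linarith) (inv_nonneg.2 hd.le)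

lemma aux_comb (N h θ K D β α : ℝ) (hN : 0 < N) (hh : 0 < h) (hθ : 0 < θ) :
    N ^ (-(4 * (α - 1))) * (N ^ (α + 1) * (N * θ) ^ (-β) * (K * h ^ 4) * (D * h ^ (2 - β)))
      = θ ^ (-β) * K * D * N ^ (5 - β - 3 * α) * h ^ (6 - β) := by
  rw [Real.mul_rpow hN.le hθ.le]
  have e1 : N ^ (-(4 * (α - 1))) * N ^ (α + 1) * N ^ (-β) = N ^ (5 - β - 3 * α) := by
    rw [← Real.rpow_add hN, ← Real.rpow_add hN]
    congr 1
    ring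
  have e2 : h ^ (4 : ℕ) * h ^ (2 - β) = h ^ (6 - β) := by
    rw [← Real.rpow_natCast h 4, ← Real.rpow_add hh]
    congr 1
    push_cast
    ring
  calc N ^ (-(4 * (α - 1))) * (N ^ (α + 1) * (N ^ (-β) * θ ^ (-β)) * (K * h ^ 4) *
        (D * h ^ (2 - β)))
      = (N ^ (-(4 * (α - 1))) * N ^ (α + 1) * N ^ (-β)) * (θ ^ (-β) * K * D) *
          (h ^ (4 : ℕ) * h ^ (2 - β)) := by ring
    _ = θ ^ (-β) * K * D * N ^ (5 - β - 3 * α) * h ^ (6 - β) := by rw [e1, e2]; ring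

set_option maxHeartbeats 1000000 in
theorem stmt_12 (β θ : ℝ) (hβ : β ∈ Set.Ioo (2:ℝ) 3) (hθ : 0 < θ) :
    ∃ C : ℝ, 0 < C ∧
      ∀ (α t h : ℝ) (n : ℕ), 0 < h → h ≤ 1 → h ≤ t → 1 ≤ n →
        (n : ℝ) ^ (-(4 * (α - 1))) *
          (∫ s in (0:ℝ)..(t + h), ∫ r in Set.Ioi (0:ℝ),
            (min r (max (t + h - s) 0) - min r (max (t - s) 0)) ^ 4 *
              ((n : ℝ) ^ (α + 1) * ((n : ℝ) * θ * r + 1) ^ (-β)))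
          ≤ C * (n : ℝ) ^ (5 - β - 3 * α) * h ^ (6 - β) := by
  obtain ⟨hβ2, hβ3⟩ := hβ
  set K : ℝ := (5 - β)⁻¹ + (β - 1)⁻¹ with hKdef
  have hKpos : 0 < K := by
    have : (0:ℝ) < (5 - β)⁻¹ := inv_pos.2 (by linarith)
    have : (0:ℝ) < (β - 1)⁻¹ := inv_pos.2 (by linarith)
    positivity
  have hK1 : (β - 1)⁻¹ ≤ K := le_add_of_nonneg_left (inv_nonneg.2 (by linarith))
  refine ⟨θ ^ (-β) * K * ((β - 2)⁻¹ + 2),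
    mul_pos (mul_pos (Real.rpow_pos_of_pos hθ _) hKpos)
      (add_pos (inv_pos.2 (by linarith)) two_pos), ?_⟩
  intro α t h n hh hh1 hht hn
  have hN : (1:ℝ) ≤ (n:ℝ) := by exact_mod_cast hn
  have hN0 : (0:ℝ) < (n:ℝ) := lt_of_lt_of_le one_pos hN
  set N : ℝ := (n : ℝ) with hNdef
  -- the inner integral, as a function of s
  set inn : ℝ → ℝ := fun s => ∫ r in Set.Ioi (0:ℝ),
      (min r (max (t + h - s) 0) - min r (max (t - s) 0)) ^ 4 *
        (N ^ (α + 1) * (N * θ * r + 1) ^ (-β)) with hinn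
  set c : ℝ := N ^ (α + 1) * (N * θ) ^ (-β) * (K * h ^ 4) with hcdef
  have hc0 : 0 ≤ c := by
    have h1 : (0:ℝ) ≤ N ^ (α + 1) := Real.rpow_nonneg hN0.le _
    have h2 : (0:ℝ) ≤ (N * θ) ^ (-β) := Real.rpow_nonneg (by positivity) _
    positivity
  set F : ℝ → ℝ := fun s => c * ((t - s) ⊔ h) ^ (1 - β) with hFdef
  -- nonnegativity of the inner integral
  have hinn_nonneg : ∀ s : ℝ, 0 ≤ inn s := by
    intro s
    apply setIntegral_nonneg measurableSet_Ioi
    intro r hr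
    have hb : (0:ℝ) ≤ N * θ * r + 1 := by
      have : (0:ℝ) < N * θ * r := by
        have := mul_pos (mul_pos hN0 hθ) hr
        simpa using this
      linarith
    exact mul_nonneg (by positivity)
      (mul_nonneg (Real.rpow_nonneg hN0.le _) (Real.rpow_nonneg hb _))
  -- pointwise facts about ϑ
  have theta_facts : ∀ s : ℝ, ∀ r : ℝ, 0 < r →
      0 ≤ min r (max (t + h - s) 0) - min r (max (t - s) 0) ∧
      min r (max (t + h - s) 0) - min r (max (t - s) 0) ≤ min r h := by
    intro s r hr
    set a : ℝ := max (t + h - s) 0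
    set b : ℝ := max (t - s) 0
    have hba : b ≤ a := max_le_max (by linarith) le_rfl
    have hb0 : 0 ≤ b := le_max_right _ _
    have hab : a ≤ b + h := max_le (by
        have := le_max_left (t - s) (0:ℝ); linarith) (by linarith)
    constructor
    · have : min r b ≤ min r a := min_le_min le_rfl hba
      linarith
    · refine le_min ?_ ?_
      · have h1 : min r a ≤ r := min_le_left _ _
        have h2 : 0 ≤ min r b := le_min hr.le hb0
        linarith
      · rcases le_total r b with hrb | hrb
        · have h1 : min r a ≤ r := min_le_left _ _
          rw [min_eq_left hrb]
          linarith
        · rw [min_eq_right hrb]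
          have h1 : min r a ≤ a := min_le_right _ _
          linarith
  -- the weight bound
  have weight_le : ∀ r : ℝ, 0 < r →
      (N * θ * r + 1) ^ (-β) ≤ (N * θ) ^ (-β) * r ^ (-β) := by
    intro r hr
    have h1 : (0:ℝ) < N * θ * r := mul_pos (mul_pos hN0 hθ) hr
    have h2 : (N * θ * r) ^ (-β) = (N * θ) ^ (-β) * r ^ (-β) :=
      Real.mul_rpow (by positivity) hr.le
    rw [← h2]
    exact Real.rpow_le_rpow_of_nonpos h1 (by linarith) (by linarith)
  -- the main bound on the inner integral
  have hf_le : ∀ s : ℝ, inn s ≤ F s := by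
    intro s
    rcases le_or_gt (t - s) h with hcase | hcase
    · -- near-diagonal case : (t-s) ⊔ h = h
      have hmh : (t - s) ⊔ h = h := max_eq_right hcase
      obtain ⟨gint, gval⟩ := caseA β h hβ2 hβ3 hh
      have step : inn s ≤ ∫ r in Ioi (0:ℝ),
          (N ^ (α + 1) * (N * θ) ^ (-β)) * ((min r h) ^ 4 * r ^ (-β)) := by
        apply integral_mono_of_nonneg
        · filter_upwards [ae_restrict_mem measurableSet_Ioi] with r hr
          have hb : (0:ℝ) ≤ N * θ * r + 1 := by nlinarith [mul_pos (mul_pos hN0 hθ) hr]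
          exact mul_nonneg (by positivity)
            (mul_nonneg (Real.rpow_nonneg hN0.le _) (Real.rpow_nonneg hb _))
        · exact gint.const_mul _
        · filter_upwards [ae_restrict_mem measurableSet_Ioi] with r hr
          obtain ⟨ht0, hth⟩ := theta_facts s r hr
          have hmin0 : (0:ℝ) ≤ min r h := le_min hr.le hh.le
          have hp : (min r (max (t + h - s) 0) - min r (max (t - s) 0)) ^ 4 ≤ (min r h) ^ 4 :=
            pow_le_pow_left₀ ht0 hth 4
          have hw := weight_le r hr
          calc (min r (max (t + h - s) 0) - min r (max (t - s) 0)) ^ 4 *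
                (N ^ (α + 1) * (N * θ * r + 1) ^ (-β))
              ≤ (min r h) ^ 4 * (N ^ (α + 1) * ((N * θ) ^ (-β) * r ^ (-β))) := by
                apply mul_le_mul hp
                · exact mul_le_mul_of_nonneg_left hw (Real.rpow_nonneg hN0.le _)
                · have hb : (0:ℝ) ≤ N * θ * r + 1 := by
                    nlinarith [mul_pos (mul_pos hN0 hθ) hr]
                  exact mul_nonneg (Real.rpow_nonneg hN0.le _) (Real.rpow_nonneg hb _)
                · positivity
            _ = (N ^ (α + 1) * (N * θ) ^ (-β)) * ((min r h) ^ 4 * r ^ (-β)) := by ring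
      calc inn s ≤ ∫ r in Ioi (0:ℝ),
            (N ^ (α + 1) * (N * θ) ^ (-β)) * ((min r h) ^ 4 * r ^ (-β)) := step
        _ = (N ^ (α + 1) * (N * θ) ^ (-β)) *
              ∫ r in Ioi (0:ℝ), (min r h) ^ 4 * r ^ (-β) := integral_const_mul _ _
        _ ≤ (N ^ (α + 1) * (N * θ) ^ (-β)) * (K * h ^ 4 * h ^ (1 - β)) := by
            apply mul_le_mul_of_nonneg_left _ (mul_nonneg (Real.rpow_nonneg hN0.le _)
              (Real.rpow_nonneg (by positivity) _))
            exact gval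
        _ = F s := by rw [hFdef]; simp only [hmh]; rw [hcdef]; ring
    · -- far case : h < t - s
      have hts : 0 < t - s := lt_trans hh hcase
      have hmh : (t - s) ⊔ h = t - s := max_eq_left hcase.le
      obtain ⟨tint, tval⟩ := tail_int β (t - s) (by linarith) hts
      set cst : ℝ := N ^ (α + 1) * (N * θ) ^ (-β) * h ^ 4 with hcst
      have hcst0 : 0 ≤ cst := by
        have h1 : (0:ℝ) ≤ N ^ (α + 1) := Real.rpow_nonneg hN0.le _
        have h2 : (0:ℝ) ≤ (N * θ) ^ (-β) := Real.rpow_nonneg (by positivity) _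
        positivity
      have gint : IntegrableOn ((Ioi (t - s)).indicator (fun r : ℝ => cst * r ^ (-β)))
          (Ioi (0:ℝ)) := by
        rw [IntegrableOn, integrable_indicator_iff measurableSet_Ioi, IntegrableOn,
          Measure.restrict_restrict measurableSet_Ioi,
          inter_eq_left.mpr (Ioi_subset_Ioi hts.le)]
        exact tint.const_mul cst
      have step : inn s ≤ ∫ r in Ioi (0:ℝ),
          (Ioi (t - s)).indicator (fun r : ℝ => cst * r ^ (-β)) r := by
        apply integral_mono_of_nonneg
        · filter_upwards [ae_restrict_mem measurableSet_Ioi] with r hr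
          have hb : (0:ℝ) ≤ N * θ * r + 1 := by nlinarith [mul_pos (mul_pos hN0 hθ) hr]
          exact mul_nonneg (by positivity)
            (mul_nonneg (Real.rpow_nonneg hN0.le _) (Real.rpow_nonneg hb _))
        · exact gint
        · filter_upwards [ae_restrict_mem measurableSet_Ioi] with r hr
          rcases le_or_gt r (t - s) with hrts | hrts
          · -- ϑ = 0 here
            have ha : min r (max (t + h - s) 0) = r := by
              rw [min_eq_left]
              exact le_max_of_le_left (by linarith)
            have hb : min r (max (t - s) 0) = r := by
              rw [min_eq_left]
              exact le_max_of_le_left hrts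
            rw [ha, hb, sub_self]
            rw [Set.indicator_of_notMem (by simpa using hrts)]
            simp
          · rw [Set.indicator_of_mem (mem_Ioi.mpr hrts)]
            obtain ⟨ht0, hth⟩ := theta_facts s r hr
            have hth' : min r (max (t + h - s) 0) - min r (max (t - s) 0) ≤ h :=
              le_trans hth (min_le_right _ _)
            have hp : (min r (max (t + h - s) 0) - min r (max (t - s) 0)) ^ 4 ≤ h ^ 4 :=
              pow_le_pow_left₀ ht0 hth' 4
            have hw := weight_le r hr
            calc (min r (max (t + h - s) 0) - min r (max (t - s) 0)) ^ 4 *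
                  (N ^ (α + 1) * (N * θ * r + 1) ^ (-β))
                ≤ h ^ 4 * (N ^ (α + 1) * ((N * θ) ^ (-β) * r ^ (-β))) := by
                  apply mul_le_mul hp
                  · exact mul_le_mul_of_nonneg_left hw (Real.rpow_nonneg hN0.le _)
                  · have hb : (0:ℝ) ≤ N * θ * r + 1 := by
                      nlinarith [mul_pos (mul_pos hN0 hθ) hr]
                    exact mul_nonneg (Real.rpow_nonneg hN0.le _) (Real.rpow_nonneg hb _)
                  · positivity
              _ = cst * r ^ (-β) := by rw [hcst]; ring
      calc inn s ≤ ∫ r in Ioi (0:ℝ),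
            (Ioi (t - s)).indicator (fun r : ℝ => cst * r ^ (-β)) r := step
        _ = ∫ r in Ioi (t - s), cst * r ^ (-β) := by
            rw [setIntegral_indicator measurableSet_Ioi,
              inter_eq_right.mpr (Ioi_subset_Ioi hts.le)]
        _ = cst * ((t - s) ^ (1 - β) / (β - 1)) := by rw [integral_const_mul, tval]
        _ ≤ F s := by
            rw [hFdef]; simp only [hmh]; rw [hcdef, hcst]
            have hrp : (0:ℝ) ≤ (t - s) ^ (1 - β) := Real.rpow_nonneg hts.le _
            have h1 : (0:ℝ) ≤ N ^ (α + 1) := Real.rpow_nonneg hN0.le _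
            have h2 : (0:ℝ) ≤ (N * θ) ^ (-β) := Real.rpow_nonneg (by positivity) _
            have key : (t - s) ^ (1 - β) / (β - 1) ≤ K * (t - s) ^ (1 - β) := by
              rw [div_eq_inv_mul]
              exact mul_le_mul_of_nonneg_right hK1 hrp
            calc N ^ (α + 1) * (N * θ) ^ (-β) * h ^ 4 * ((t - s) ^ (1 - β) / (β - 1))
                ≤ N ^ (α + 1) * (N * θ) ^ (-β) * h ^ 4 * (K * (t - s) ^ (1 - β)) := by
                  apply mul_le_mul_of_nonneg_left key
                  positivity
              _ = N ^ (α + 1) * (N * θ) ^ (-β) * (K * h ^ 4) * (t - s) ^ (1 - β) := by ring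
  -- F is continuous, hence interval integrable
  have hmaxpos : ∀ s : ℝ, (0:ℝ) < (t - s) ⊔ h := fun s => lt_of_lt_of_le hh (le_max_right _ _)
  have hGcont : Continuous (fun s : ℝ => ((t - s) ⊔ h) ^ (1 - β)) := by
    apply Continuous.rpow_const
    · exact (continuous_const.sub continuous_id).max continuous_const
    · intro s; exact Or.inl (ne_of_gt (hmaxpos s))
  have hFcont : Continuous F := continuous_const.mul hGcont
  have hFint : IntervalIntegrable F volume 0 (t + h) := hFcont.intervalIntegrable _ _
  have key : ‖∫ s in (0:ℝ)..(t + h), inn s‖ ≤ |∫ s in (0:ℝ)..(t + h), F s| := by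
    apply intervalIntegral.norm_integral_le_abs_of_norm_le _ hFint
    filter_upwards with s
    rw [Real.norm_eq_abs, abs_of_nonneg (hinn_nonneg s)]
    exact hf_le s
  -- compute the integral of F
  have hG0 : ∀ s : ℝ, 0 ≤ ((t - s) ⊔ h) ^ (1 - β) := fun s => Real.rpow_nonneg (hmaxpos s).le _
  have hGbound : ∫ s in (0:ℝ)..(t + h), ((t - s) ⊔ h) ^ (1 - β)
      ≤ ((β - 2)⁻¹ + 2) * h ^ (2 - β) := by
    have hth0 : (0:ℝ) ≤ t - h := by linarith
    have ht0 : (0:ℝ) < t := lt_of_lt_of_le hh hht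
    have hi1 : IntervalIntegrable (fun s : ℝ => ((t - s) ⊔ h) ^ (1 - β)) volume 0 (t - h) :=
      hGcont.intervalIntegrable _ _
    have hi2 : IntervalIntegrable (fun s : ℝ => ((t - s) ⊔ h) ^ (1 - β)) volume (t - h) (t + h) :=
      hGcont.intervalIntegrable _ _
    have hsplit := intervalIntegral.integral_add_adjacent_intervals hi1 hi2
    rw [← hsplit]
    have v1 : ∫ s in (0:ℝ)..(t - h), ((t - s) ⊔ h) ^ (1 - β)
        = (t ^ (2 - β) - h ^ (2 - β)) / (2 - β) := by
      have e1 : EqOn (fun s : ℝ => ((t - s) ⊔ h) ^ (1 - β))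
          (fun s : ℝ => (t - s) ^ (1 - β)) (uIcc 0 (t - h)) := by
        rw [uIcc_of_le hth0]
        intro s hs
        have : h ≤ t - s := by
          have := hs.2
          simp only [mem_Icc] at hs
          linarith [hs.2]
        simp only [max_eq_left this]
      rw [intervalIntegral.integral_congr e1,
        intervalIntegral.integral_comp_sub_left (fun u : ℝ => u ^ (1 - β)) t,
        show t - (t - h) = h by ring, sub_zero,
        integral_rpow (Or.inr ⟨by intro hc; linarith [hc] , by
          rw [uIcc_of_le hht]
          intro hx
          exact absurd hx.1 (not_le.2 hh)⟩),
        show (1:ℝ) - β + 1 = 2 - β by ring]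
    have v2 : ∫ s in (t - h)..(t + h), ((t - s) ⊔ h) ^ (1 - β) = 2 * h ^ (2 - β) := by
      have e2 : EqOn (fun s : ℝ => ((t - s) ⊔ h) ^ (1 - β))
          (fun _ : ℝ => h ^ (1 - β)) (uIcc (t - h) (t + h)) := by
        rw [uIcc_of_le (by linarith : t - h ≤ t + h)]
        intro s hs
        simp only [mem_Icc] at hs
        have : t - s ≤ h := by linarith [hs.1]
        simp only [max_eq_right this]
      rw [intervalIntegral.integral_congr e2, intervalIntegral.integral_const, smul_eq_mul,
        show t + h - (t - h) = 2 * h by ring,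
        show (2:ℝ) - β = 1 + (1 - β) by ring, Real.rpow_add hh, Real.rpow_one]
      ring
    rw [v1, v2]
    have hb2 : (0:ℝ) < β - 2 := by linarith
    have hle := aux_div (β - 2) (t ^ (2 - β)) (h ^ (2 - β)) hb2
      (Real.rpow_nonneg ht0.le _)
    rw [show -(β - 2) = 2 - β by ring] at hle
    have := hle
    linarith [this]
  -- put everything together
  have hFeval : |∫ s in (0:ℝ)..(t + h), F s| ≤ c * (((β - 2)⁻¹ + 2) * h ^ (2 - β)) := by
    have : ∫ s in (0:ℝ)..(t + h), F s
        = c * ∫ s in (0:ℝ)..(t + h), ((t - s) ⊔ h) ^ (1 - β) := by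
      rw [hFdef]
      exact intervalIntegral.integral_const_mul _ _
    rw [this, abs_mul, abs_of_nonneg hc0,
      abs_of_nonneg (intervalIntegral.integral_nonneg (by linarith) (fun s _ => hG0 s))]
    exact mul_le_mul_of_nonneg_left hGbound hc0
  have main : (∫ s in (0:ℝ)..(t + h), inn s) ≤ c * (((β - 2)⁻¹ + 2) * h ^ (2 - β)) := by
    refine le_trans (le_trans (le_abs_self _) ?_) hFeval
    simpa [Real.norm_eq_abs] using key
  calc N ^ (-(4 * (α - 1))) * (∫ s in (0:ℝ)..(t + h), inn s)
      ≤ N ^ (-(4 * (α - 1))) * (c * (((β - 2)⁻¹ + 2) * h ^ (2 - β))) :=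
        mul_le_mul_of_nonneg_left main (Real.rpow_nonneg hN0.le _)
    _ = θ ^ (-β) * K * ((β - 2)⁻¹ + 2) * N ^ (5 - β - 3 * α) * h ^ (6 - β) := by
        rw [hcdef]
        exact aux_comb N h θ K ((β - 2)⁻¹ + 2) β α hN0 hh hθ
end

section
/- Let β ∈ (2,3), θ > 0, 0 < h ≤ 1, h ≤ t < ∞, and define ϑ(r,s) = r∧(t+h-s)₊ - r∧(t-s)₊. There is a constant C depending only on β and θ such that n^{-4(α-1)} (∫₀^{t+h} ∫₀^∞ ϑ(r,s)² n^{α+1}(nθr+1)^{-β} dr ds)² ≤ C n^{6-2β-2α} h^{2(4-β)} for all n ≥ 1. -/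
open Real Set MeasureTheory

lemma weight_bound {β a r : ℝ} (hβ : 0 ≤ β) (ha : 0 < a) (hr : 0 < r) :
    (a * r + 1) ^ (-β) ≤ a ^ (-β) * r ^ (-β) :=
  calc (a * r + 1) ^ (-β) ≤ (a * r) ^ (-β) :=
        Real.rpow_le_rpow_of_nonpos (mul_pos ha hr) (by linarith) (by linarith)
    _ = a ^ (-β) * r ^ (-β) := Real.mul_rpow ha.le hr.le


lemma L1 {β : ℝ} (hβ1 : (2:ℝ) < β) (hβ2 : β < 3) {a u d : ℝ} (ha : 0 < a)
    (hu : 0 < u) (hd : 0 ≤ d) :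
    ∫ r in Ioi (0:ℝ), (min r (u + d) - min r u) ^ 2 * (a * r + 1) ^ (-β)
      ≤ d ^ 2 * a ^ (-β) / (β - 1) * u ^ (1 - β) := by
  have hint : IntegrableOn (fun r : ℝ => d ^ 2 * a ^ (-β) * r ^ (-β)) (Ioi u) volume :=
    (integrableOn_Ioi_rpow_of_lt (by linarith) hu).const_mul _
  have hgi : Integrable ((Ioi u).indicator (fun r => d ^ 2 * a ^ (-β) * r ^ (-β)))
      (volume.restrict (Ioi (0:ℝ))) :=
    (hint.integrable_indicator measurableSet_Ioi).integrableOn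
  have hle : ∀ r ∈ Ioi (0:ℝ),
      (min r (u + d) - min r u) ^ 2 * (a * r + 1) ^ (-β)
        ≤ (Ioi u).indicator (fun r => d ^ 2 * a ^ (-β) * r ^ (-β)) r := by
    intro r hr
    simp only [mem_Ioi] at hr
    by_cases hru : r ≤ u
    · have h1 : min r (u + d) = r := min_eq_left (by linarith)
      rw [h1, min_eq_left hru, sub_self]
      refine le_trans (le_of_eq (by norm_num)) (Set.indicator_nonneg (fun x hx => ?_) r)
      have hx0 : 0 < x := lt_trans hu hx
      positivity
    · push_neg at hru
      rw [Set.indicator_of_mem (mem_Ioi.mpr hru)]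
      have h1 : min r u = u := min_eq_right hru.le
      have h2 : min r (u + d) ≤ u + d := min_le_right _ _
      have h3 : u ≤ min r (u + d) := le_min hru.le (by linarith)
      have h4 : (min r (u + d) - min r u) ^ 2 ≤ d ^ 2 := by
        rw [h1]; nlinarith
      have h5 : (a * r + 1) ^ (-β) ≤ a ^ (-β) * r ^ (-β) :=
        weight_bound (by linarith) ha hr
      have h6 : (0:ℝ) ≤ (a * r + 1) ^ (-β) := Real.rpow_nonneg (by positivity) _
      calc (min r (u + d) - min r u) ^ 2 * (a * r + 1) ^ (-β)
          ≤ d ^ 2 * (a ^ (-β) * r ^ (-β)) :=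
            mul_le_mul h4 h5 h6 (by positivity)
        _ = d ^ 2 * a ^ (-β) * r ^ (-β) := by ring
  have hf0 : 0 ≤ᵐ[volume.restrict (Ioi (0:ℝ))]
      fun r => (min r (u + d) - min r u) ^ 2 * (a * r + 1) ^ (-β) :=
    ae_restrict_of_forall_mem measurableSet_Ioi (fun r hr =>
      mul_nonneg (sq_nonneg _) (Real.rpow_nonneg
        (by have := mem_Ioi.mp hr; positivity) _))
  have key := integral_mono_of_nonneg hf0 hgi
    (ae_restrict_of_forall_mem measurableSet_Ioi hle)
  refine key.trans ?_
  rw [setIntegral_indicator measurableSet_Ioi]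
  have hIoi : Ioi (0:ℝ) ∩ Ioi u = Ioi u := by
    rw [Set.Ioi_inter_Ioi, max_eq_right hu.le]
  rw [hIoi, integral_const_mul, integral_Ioi_rpow_of_lt (by linarith) hu]
  rw [show -β + 1 = 1 - β by ring]
  have hβ1' : (0:ℝ) < β - 1 := by linarith
  rw [show -u ^ (1-β) / (1-β) = u ^ (1-β) / (β-1) by rw [div_eq_div_iff (by linarith) (by linarith)]; ring]
  rw [div_eq_mul_inv, div_eq_mul_inv]
  ring_nf
  exact le_refl _

lemma L2 {β : ℝ} (hβ1 : (2:ℝ) < β) (hβ2 : β < 3) {a d A B : ℝ} (ha : 0 < a)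
    (hd : 0 < d) (hB : 0 ≤ B) (hBA : B ≤ A) (hABd : A ≤ B + d) :
    ∫ r in Ioi (0:ℝ), (min r A - min r B) ^ 2 * (a * r + 1) ^ (-β)
      ≤ a ^ (-β) * d ^ (3 - β) * (1 / (3 - β) + 1 / (β - 1)) := by
  set g : ℝ → ℝ := fun r => a ^ (-β) * ((min r d) ^ 2 * r ^ (-β)) with hgdef
  -- integrability of g on the two pieces
  have hint1 : IntegrableOn g (Ioc 0 d) volume := by
    have : IntegrableOn (fun r : ℝ => a ^ (-β) * r ^ (2 - β)) (Ioc 0 d) volume :=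
      Integrable.const_mul ((intervalIntegrable_iff_integrableOn_Ioc_of_le hd.le).mp
        (intervalIntegral.intervalIntegrable_rpow' (by linarith))) _
    refine this.congr_fun (fun r hr => ?_) measurableSet_Ioc
    obtain ⟨hr0, hrd⟩ := hr
    rw [hgdef]
    simp only
    rw [min_eq_left hrd, ← Real.rpow_natCast r 2, ← Real.rpow_add hr0,
      show ((2:ℕ):ℝ) + -β = 2 - β by push_cast; ring]
  have hint2 : IntegrableOn g (Ioi d) volume := by
    have : IntegrableOn (fun r : ℝ => a ^ (-β) * d ^ 2 * r ^ (-β)) (Ioi d) volume :=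
      (integrableOn_Ioi_rpow_of_lt (by linarith) hd).const_mul _
    refine this.congr_fun (fun r hr => ?_) measurableSet_Ioi
    rw [hgdef]
    simp only
    rw [min_eq_right (le_of_lt hr)]
    ring
  have hunion : Ioc (0:ℝ) d ∪ Ioi d = Ioi 0 := Ioc_union_Ioi_eq_Ioi hd.le
  have hgi : Integrable g (volume.restrict (Ioi (0:ℝ))) := by
    rw [← hunion]; exact hint1.union hint2
  have hle : ∀ r ∈ Ioi (0:ℝ), (min r A - min r B) ^ 2 * (a * r + 1) ^ (-β) ≤ g r := by
    intro r hr
    simp only [mem_Ioi] at hr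
    have hϑ0 : 0 ≤ min r A - min r B := by
      have := min_le_min (le_refl r) hBA; linarith [min_le_min (le_refl r) hBA]
    have hϑr : min r A - min r B ≤ r := by
      have h1 : min r A ≤ r := min_le_left _ _
      have h2 : 0 ≤ min r B := le_min hr.le hB
      linarith
    have hϑd : min r A - min r B ≤ d := by
      have h1 : min r A ≤ min r (B + d) := min_le_min (le_refl r) hABd
      have h2 : min r (B + d) ≤ min r B + d := by
        rcases le_total r B with hc | hc
        · have : min r (B + d) ≤ r := min_le_left _ _
          have : min r B = r := min_eq_left hc
          linarith [min_le_left r (B + d)]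
        · have : min r B = B := min_eq_right hc
          linarith [min_le_right r (B + d)]
      linarith
    have h4 : (min r A - min r B) ^ 2 ≤ (min r d) ^ 2 := by
      have : min r A - min r B ≤ min r d := le_min hϑr hϑd
      nlinarith [le_min hϑr hϑd]
    have h5 : (a * r + 1) ^ (-β) ≤ a ^ (-β) * r ^ (-β) :=
      weight_bound (by linarith) ha hr
    have h6 : (0:ℝ) ≤ (a * r + 1) ^ (-β) := Real.rpow_nonneg (by positivity) _
    have h7 : (0:ℝ) ≤ (min r d) ^ 2 := sq_nonneg _
    calc (min r A - min r B) ^ 2 * (a * r + 1) ^ (-β)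
        ≤ (min r d) ^ 2 * (a ^ (-β) * r ^ (-β)) := mul_le_mul h4 h5 h6 h7
      _ = g r := by rw [hgdef]; ring
  have hf0 : 0 ≤ᵐ[volume.restrict (Ioi (0:ℝ))]
      fun r => (min r A - min r B) ^ 2 * (a * r + 1) ^ (-β) :=
    ae_restrict_of_forall_mem measurableSet_Ioi (fun r hr =>
      mul_nonneg (sq_nonneg _) (Real.rpow_nonneg
        (by have := mem_Ioi.mp hr; positivity) _))
  have key := integral_mono_of_nonneg hf0 hgi
    (ae_restrict_of_forall_mem measurableSet_Ioi hle)
  refine key.trans (le_of_eq ?_)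
  rw [← hunion, setIntegral_union (Ioc_disjoint_Ioi le_rfl) measurableSet_Ioi hint1 hint2]
  have e1 : ∫ r in Ioc (0:ℝ) d, g r = a ^ (-β) * (d ^ (3 - β) / (3 - β)) := by
    rw [setIntegral_congr_fun measurableSet_Ioc
      (fun r hr => by
        obtain ⟨hr0, hrd⟩ := hr
        show g r = a ^ (-β) * r ^ (2 - β)
        rw [hgdef]; simp only
        rw [min_eq_left hrd, ← Real.rpow_natCast r 2, ← Real.rpow_add hr0,
          show ((2:ℕ):ℝ) + -β = 2 - β by push_cast; ring])]
    rw [integral_const_mul]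
    rw [← intervalIntegral.integral_of_le hd.le,
      integral_rpow (Or.inl (by linarith : (-1:ℝ) < 2 - β))]
    rw [Real.zero_rpow (by intro hc; rw [show 2 - β + 1 = 3 - β by ring] at hc; linarith)]
    rw [show 2 - β + 1 = 3 - β by ring]
    ring
  have e2 : ∫ r in Ioi d, g r = a ^ (-β) * (d ^ (3 - β) / (β - 1)) := by
    rw [setIntegral_congr_fun measurableSet_Ioi
      (fun r hr => by
        show g r = a ^ (-β) * d ^ 2 * r ^ (-β)
        rw [hgdef]; simp only
        rw [min_eq_right (le_of_lt hr)]; ring)]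
    rw [integral_const_mul, integral_Ioi_rpow_of_lt (by linarith) hd]
    rw [show -β + 1 = 1 - β by ring]
    have h8 : d ^ (2:ℕ) * d ^ (1 - β) = d ^ (3 - β) := by
      rw [← Real.rpow_natCast d 2, ← Real.rpow_add hd]
      congr 1; push_cast; ring
    have h9 : (1:ℝ)/(β-1) = -(1/(1-β)) := by
      rw [show β - 1 = -(1-β) by ring, div_neg]
    have : d ^ (2:ℕ) * (-d ^ (1 - β) / (1 - β)) = d ^ (3 - β) / (β - 1) := by
      calc d ^ (2:ℕ) * (-d ^ (1 - β) / (1 - β)) = (d ^ (2:ℕ) * d ^ (1-β)) * (-(1/(1-β))) := by ring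
        _ = d ^ (3 - β) * (1/(β-1)) := by rw [h8, h9]
        _ = d ^ (3 - β) / (β - 1) := by ring
    rw [mul_assoc, this]
  rw [e1, e2]; ring

theorem stmt_13 (β θ : ℝ) (hβ : β ∈ Set.Ioo (2:ℝ) 3) (hθ : 0 < θ) :
    ∃ C : ℝ, 0 < C ∧
      ∀ (α t h : ℝ) (n : ℕ), 0 < h → h ≤ 1 → h ≤ t → 1 ≤ n →
        (n : ℝ) ^ (-(4 * (α - 1))) *
          (∫ s in (0:ℝ)..(t + h), ∫ r in Set.Ioi (0:ℝ),
            (min r (max (t + h - s) 0) - min r (max (t - s) 0)) ^ 2 *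
              ((n : ℝ) ^ (α + 1) * ((n : ℝ) * θ * r + 1) ^ (-β))) ^ 2
          ≤ C * (n : ℝ) ^ (6 - 2 * β - 2 * α) * h ^ (2 * (4 - β)) := by
  obtain ⟨hβ1, hβ2⟩ := hβ
  have hb1 : (0:ℝ) < β - 1 := by linarith
  have hb2 : (0:ℝ) < β - 2 := by linarith
  have hb3 : (0:ℝ) < 3 - β := by linarith
  set K : ℝ := 1 / (β - 1) / (β - 2) + 2 / (3 - β) + 2 / (β - 1) with hKdef
  have hK : 0 < K := by
    rw [hKdef]; positivity
  have hθβ : 0 < θ ^ (-β) := Real.rpow_pos_of_pos hθ _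
  refine ⟨(θ ^ (-β) * K) ^ 2, by positivity, ?_⟩
  intro α t h n hh hh1 hht hn
  have hN0 : (0:ℝ) < (n:ℝ) := by exact_mod_cast Nat.lt_of_lt_of_le Nat.zero_lt_one hn
  set N : ℝ := (n:ℝ) with hNdef
  set F : ℝ → ℝ := fun s => ∫ r in Set.Ioi (0:ℝ),
      (min r (max (t + h - s) 0) - min r (max (t - s) 0)) ^ 2 *
        (N ^ (α + 1) * (N * θ * r + 1) ^ (-β)) with hFdef
  have ha : 0 < N * θ := mul_pos hN0 hθ
  have hNα : (0:ℝ) ≤ N ^ (α + 1) := Real.rpow_nonneg hN0.le _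
  -- nonnegativity of F
  have hF0 : ∀ s, 0 ≤ F s := by
    intro s
    apply setIntegral_nonneg measurableSet_Ioi
    intro r hr
    have hr0 : 0 < r := hr
    have : (0:ℝ) ≤ (N * θ * r + 1) ^ (-β) := Real.rpow_nonneg (by positivity) _
    positivity
  by_cases hint : IntervalIntegrable F volume 0 (t + h)
  · -- main case
    have h0th : (0:ℝ) ≤ t - h := by linarith
    have huIcc : uIcc (0:ℝ) (t + h) = Icc 0 (t + h) := uIcc_of_le (by linarith)
    have i1 : IntervalIntegrable F volume 0 (t - h) := by
      refine hint.mono_set ?_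
      rw [huIcc, uIcc_of_le h0th]
      exact Icc_subset_Icc le_rfl (by linarith)
    have i2 : IntervalIntegrable F volume (t - h) (t + h) := by
      refine hint.mono_set ?_
      rw [huIcc, uIcc_of_le (by linarith : t - h ≤ t + h)]
      exact Icc_subset_Icc h0th le_rfl
    have hsplit : (∫ s in (0:ℝ)..(t + h), F s)
        = (∫ s in (0:ℝ)..(t - h), F s) + ∫ s in (t - h)..(t + h), F s :=
      (intervalIntegral.integral_add_adjacent_intervals i1 i2).symm
    -- bound on piece 1
    set c1 : ℝ := N ^ (α + 1) * (h ^ 2 * (N * θ) ^ (-β) / (β - 1)) with hc1def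
    have hpt1 : ∀ s ∈ Icc (0:ℝ) (t - h), F s ≤ c1 * (t - s) ^ (1 - β) := by
      intro s hs
      obtain ⟨hs0, hs1⟩ := hs
      have hu : 0 < t - s := by linarith
      have e1 : max (t + h - s) 0 = (t - s) + h := by
        rw [max_eq_left (by linarith)]; ring
      have e2 : max (t - s) 0 = t - s := max_eq_left hu.le
      have e3 : F s = N ^ (α + 1) * ∫ r in Set.Ioi (0:ℝ),
          (min r ((t - s) + h) - min r (t - s)) ^ 2 * (N * θ * r + 1) ^ (-β) := by
        rw [hFdef]
        simp only [e1, e2,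
          show ∀ x y : ℝ, x * (N ^ (α + 1) * y) = N ^ (α + 1) * (x * y) from
            fun x y => by ring]
        rw [integral_const_mul]
      rw [e3, hc1def]
      calc N ^ (α + 1) * ∫ r in Set.Ioi (0:ℝ),
            (min r ((t - s) + h) - min r (t - s)) ^ 2 * (N * θ * r + 1) ^ (-β)
          ≤ N ^ (α + 1) * (h ^ 2 * (N * θ) ^ (-β) / (β - 1) * (t - s) ^ (1 - β)) :=
            mul_le_mul_of_nonneg_left (L1 hβ1 hβ2 ha hu hh.le) hNα
        _ = N ^ (α + 1) * (h ^ 2 * (N * θ) ^ (-β) / (β - 1)) * (t - s) ^ (1 - β) := by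
            ring
    have ib1 : IntervalIntegrable (fun s => c1 * (t - s) ^ (1 - β)) volume 0 (t - h) := by
      apply ContinuousOn.intervalIntegrable
      apply ContinuousOn.mul continuousOn_const
      apply ContinuousOn.rpow_const
        ((by fun_prop : Continuous fun s : ℝ => t - s).continuousOn)
      intro x hx
      rw [uIcc_of_le h0th] at hx
      exact Or.inl (by intro hc; nlinarith [hx.2])
    have hI1 : (∫ s in (0:ℝ)..(t - h), F s)
        ≤ c1 * ((h ^ (2 - β) - t ^ (2 - β)) / (β - 2)) := by
      have step1 : (∫ s in (0:ℝ)..(t - h), F s)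
          ≤ ∫ s in (0:ℝ)..(t - h), c1 * (t - s) ^ (1 - β) :=
        intervalIntegral.integral_mono_on h0th i1 ib1 hpt1
      refine step1.trans (le_of_eq ?_)
      rw [intervalIntegral.integral_const_mul]
      congr 1
      have comp := intervalIntegral.integral_comp_sub_left
        (a := (0:ℝ)) (b := t - h) (fun x => x ^ (1 - β)) t
      rw [show t - (t - h) = h by ring, show t - 0 = t by ring] at comp
      rw [comp, integral_rpow (Or.inr ⟨by intro hc; linarith [hc],
        by rw [uIcc_of_le hht]; exact fun hc => absurd hc.1 (not_le.mpr hh)⟩)]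
      rw [show 1 - β + 1 = 2 - β by ring]
      rw [div_eq_div_iff (by linarith : 2 - β ≠ 0) (by linarith : β - 2 ≠ 0)]
      ring
    -- bound on piece 2
    set c2 : ℝ := N ^ (α + 1) * ((N * θ) ^ (-β) * h ^ (3 - β) * (1 / (3 - β) + 1 / (β - 1)))
      with hc2def
    have hpt2 : ∀ s ∈ Icc (t - h) (t + h), F s ≤ c2 := by
      intro s hs
      have e3 : F s = N ^ (α + 1) * ∫ r in Set.Ioi (0:ℝ),
          (min r (max (t + h - s) 0) - min r (max (t - s) 0)) ^ 2 *
            (N * θ * r + 1) ^ (-β) := by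
        rw [hFdef]
        simp only [show ∀ x y : ℝ, x * (N ^ (α + 1) * y) = N ^ (α + 1) * (x * y) from
            fun x y => by ring]
        rw [integral_const_mul]
      rw [e3, hc2def]
      refine mul_le_mul_of_nonneg_left ?_ hNα
      refine L2 hβ1 hβ2 ha hh (le_max_right _ _)
        (max_le_max (by linarith) le_rfl) ?_
      refine max_le (by linarith [le_max_left (t - s) (0:ℝ)]) ?_
      linarith [le_max_right (t - s) (0:ℝ)]
    have hI2 : (∫ s in (t - h)..(t + h), F s) ≤ 2 * h * c2 := by
      have step1 : (∫ s in (t - h)..(t + h), F s)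
          ≤ ∫ _s in (t - h)..(t + h), c2 :=
        intervalIntegral.integral_mono_on (by linarith) i2
          intervalIntegrable_const hpt2
      refine step1.trans (le_of_eq ?_)
      rw [intervalIntegral.integral_const, smul_eq_mul]
      ring
    -- atoms
    have haa : (N * θ) ^ (-β) = N ^ (-β) * θ ^ (-β) := Real.mul_rpow hN0.le hθ.le
    have hNN : N ^ (α + 1) * N ^ (-β) = N ^ (α + 1 - β) := by
      rw [← Real.rpow_add hN0, show α + 1 + -β = α + 1 - β by ring]
    have h2h : h ^ (2:ℕ) * h ^ (2 - β) = h ^ (4 - β) := by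
      rw [← Real.rpow_natCast h 2, ← Real.rpow_add hh,
        show ((2:ℕ):ℝ) + (2 - β) = 4 - β by push_cast; ring]
    have h1h : h * h ^ (3 - β) = h ^ (4 - β) := by
      nth_rewrite 1 [← Real.rpow_one h]
      rw [← Real.rpow_add hh, show (1:ℝ) + (3 - β) = 4 - β by ring]
    set E : ℝ := θ ^ (-β) * K * (N ^ (α + 1 - β) * h ^ (4 - β)) with hEdef
    have hB1 : c1 * ((h ^ (2 - β) - t ^ (2 - β)) / (β - 2))
        ≤ θ ^ (-β) * N ^ (α + 1 - β) * h ^ (4 - β) * (1 / (β - 1) / (β - 2)) := by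
      have h1 : c1 * ((h ^ (2 - β) - t ^ (2 - β)) / (β - 2))
          ≤ c1 * (h ^ (2 - β) / (β - 2)) := by
        have hc1nn : 0 ≤ c1 := by
          rw [hc1def]
          have : (0:ℝ) ≤ (N * θ) ^ (-β) := Real.rpow_nonneg ha.le _
          positivity
        refine mul_le_mul_of_nonneg_left ?_ hc1nn
        have ht2 : 0 ≤ t ^ (2 - β) := Real.rpow_nonneg (by linarith) _
        exact (div_le_div_iff_of_pos_right hb2).mpr (by linarith)
      refine h1.trans (le_of_eq ?_)
      rw [show c1 * (h ^ (2 - β) / (β - 2))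
          = (N ^ (α + 1) * N ^ (-β)) * θ ^ (-β) * (h ^ (2:ℕ) * h ^ (2 - β))
            * (1 / (β - 1) / (β - 2)) from by rw [hc1def, haa]; ring, hNN, h2h]
      ring
    have hB2 : 2 * h * c2
        ≤ θ ^ (-β) * N ^ (α + 1 - β) * h ^ (4 - β) * (2 / (3 - β) + 2 / (β - 1)) := by
      refine le_of_eq ?_
      rw [show 2 * h * c2
          = (N ^ (α + 1) * N ^ (-β)) * θ ^ (-β) * (h * h ^ (3 - β))
            * (2 / (3 - β) + 2 / (β - 1)) from by rw [hc2def, haa]; ring,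
        hNN, h1h]
      ring
    have hSE : (∫ s in (0:ℝ)..(t + h), F s) ≤ E := by
      rw [hsplit, hEdef, hKdef]
      calc (∫ s in (0:ℝ)..(t - h), F s) + ∫ s in (t - h)..(t + h), F s
          ≤ c1 * ((h ^ (2 - β) - t ^ (2 - β)) / (β - 2)) + 2 * h * c2 :=
            add_le_add hI1 hI2
        _ ≤ θ ^ (-β) * N ^ (α + 1 - β) * h ^ (4 - β) * (1 / (β - 1) / (β - 2))
            + θ ^ (-β) * N ^ (α + 1 - β) * h ^ (4 - β) * (2 / (3 - β) + 2 / (β - 1)) :=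
            add_le_add hB1 hB2
        _ = θ ^ (-β) * (1 / (β - 1) / (β - 2) + 2 / (3 - β) + 2 / (β - 1))
            * (N ^ (α + 1 - β) * h ^ (4 - β)) := by ring
    have hS0 : 0 ≤ ∫ s in (0:ℝ)..(t + h), F s :=
      intervalIntegral.integral_nonneg (by linarith) (fun s _ => hF0 s)
    have hE0 : 0 ≤ E := by
      rw [hEdef]
      have := Real.rpow_nonneg hN0.le (α + 1 - β)
      have := Real.rpow_nonneg hh.le (4 - β)
      positivity
    have hsq : (∫ s in (0:ℝ)..(t + h), F s) ^ 2 ≤ E ^ 2 := by nlinarith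
    have hfinal : N ^ (-(4 * (α - 1))) * E ^ 2
        = (θ ^ (-β) * K) ^ 2 * N ^ (6 - 2 * β - 2 * α) * h ^ (2 * (4 - β)) := by
      have eh : h ^ (4 - β) * h ^ (4 - β) = h ^ (2 * (4 - β)) := by
        rw [← Real.rpow_add hh, show (4 - β) + (4 - β) = 2 * (4 - β) by ring]
      have eN : N ^ (-(4 * (α - 1))) * (N ^ (α + 1 - β) * N ^ (α + 1 - β))
          = N ^ (6 - 2 * β - 2 * α) := by
        rw [← Real.rpow_add hN0, ← Real.rpow_add hN0,
          show -(4 * (α - 1)) + (α + 1 - β + (α + 1 - β)) = 6 - 2 * β - 2 * α by ring]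
      calc N ^ (-(4 * (α - 1))) * E ^ 2
          = (θ ^ (-β) * K) ^ 2 *
            (N ^ (-(4 * (α - 1))) * (N ^ (α + 1 - β) * N ^ (α + 1 - β))) *
            (h ^ (4 - β) * h ^ (4 - β)) := by rw [hEdef]; ring
        _ = (θ ^ (-β) * K) ^ 2 * N ^ (6 - 2 * β - 2 * α) * h ^ (2 * (4 - β)) := by
            rw [eN, eh]
    calc N ^ (-(4 * (α - 1))) * (∫ s in (0:ℝ)..(t + h), F s) ^ 2
        ≤ N ^ (-(4 * (α - 1))) * E ^ 2 :=
          mul_le_mul_of_nonneg_left hsq (Real.rpow_nonneg hN0.le _)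
      _ = (θ ^ (-β) * K) ^ 2 * N ^ (6 - 2 * β - 2 * α) * h ^ (2 * (4 - β)) := hfinal
  · rw [intervalIntegral.integral_undef hint]
    have : (0:ℝ) ^ 2 = 0 := by norm_num
    rw [this, mul_zero]
    have h1 : (0:ℝ) ≤ N ^ (6 - 2 * β - 2 * α) := Real.rpow_nonneg hN0.le _
    have h2 : (0:ℝ) ≤ h ^ (2 * (4 - β)) := Real.rpow_nonneg hh.le _
    positivity
end

section
/- For β ∈ (2,3) and 0 ≤ z ≤ s ≤ t, the identity holds: (2/(3-β))(s-z)^{3-β} + (1/(β-2))(s-z)[(s-z)^{2-β} - (t-z)^{2-β}] = ∫_z^s ∫_z^t (max(u,v) - z)^{1-β} du dv. -/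
open Real Set MeasureTheory

theorem stmt_14 (β z s t : ℝ) (hβ : β ∈ Set.Ioo (2:ℝ) 3)
    (hz : 0 ≤ z) (hzs : z ≤ s) (hst : s ≤ t) :
    (2 / (3 - β)) * (s - z) ^ (3 - β) +
      (1 / (β - 2)) * (s - z) * ((s - z) ^ (2 - β) - (t - z) ^ (2 - β)) =
    ∫ v in z..s, ∫ u in z..t, (max u v - z) ^ (1 - β) := by
  obtain ⟨hβ2, hβ3⟩ := hβ
  have h2β : (2:ℝ) - β ≠ 0 := by linarith
  have h3β : (3:ℝ) - β ≠ 0 := by linarith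
  rcases eq_or_lt_of_le hzs with rfl | hzs'
  · simp [Real.zero_rpow h3β, intervalIntegral.integral_same]
  · have hzt : z < t := lt_of_lt_of_le hzs' hst
    have hsz : (0:ℝ) < s - z := by linarith
    have htz : (0:ℝ) < t - z := by linarith
    -- inner integral
    have inner_eq : ∀ v ∈ Set.Ioc z s,
        (∫ u in z..t, (max u v - z) ^ (1 - β)) =
          (1 - 1/(2-β)) * (v - z) ^ (2 - β) + (t - z) ^ (2 - β) / (2 - β) := by
      intro v hv
      have hzv : z < v := hv.1
      have hvt : v ≤ t := le_trans hv.2 hst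
      have hc : Continuous (fun u : ℝ => (max u v - z) ^ (1 - β)) := by
        apply Continuous.rpow_const ((continuous_id.max continuous_const).sub continuous_const)
        intro x
        left
        have := le_max_right x v
        intro h
        simp only [id_eq, Pi.sub_apply] at h
        linarith
      have hi1 : IntervalIntegrable (fun u : ℝ => (max u v - z) ^ (1 - β)) volume z v :=
        hc.intervalIntegrable z v
      have hi2 : IntervalIntegrable (fun u : ℝ => (max u v - z) ^ (1 - β)) volume v t :=
        hc.intervalIntegrable v t
      rw [← intervalIntegral.integral_add_adjacent_intervals hi1 hi2]
      have e1 : (∫ u in z..v, (max u v - z) ^ (1 - β)) = (v - z) ^ (2 - β) := by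
        rw [intervalIntegral.integral_congr (g := fun _ => (v - z) ^ (1 - β))
          (by
            intro u hu
            rw [Set.uIcc_of_le hzv.le] at hu
            simp [max_eq_right hu.2])]
        rw [intervalIntegral.integral_const, smul_eq_mul,
          show (2:ℝ) - β = 1 + (1 - β) by ring, Real.rpow_add (by linarith), Real.rpow_one]
      have e2 : (∫ u in v..t, (max u v - z) ^ (1 - β)) =
          ((t - z) ^ (2 - β) - (v - z) ^ (2 - β)) / (2 - β) := by
        rw [intervalIntegral.integral_congr (g := fun u => (u - z) ^ (1 - β))
          (by
            intro u hu
            rw [Set.uIcc_of_le hvt] at hu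
            simp [max_eq_left hu.1])]
        rw [intervalIntegral.integral_comp_sub_right (fun x => x ^ (1 - β)) z]
        rw [integral_rpow (Or.inr ⟨by intro h; apply h2β; linarith [sub_eq_iff_eq_add.mp h],
          by
            rw [Set.uIcc_of_le (by linarith : v - z ≤ t - z)]
            intro h
            exact absurd h.1 (by push_neg; linarith)⟩)]
        rw [show (1:ℝ) - β + 1 = 2 - β by ring]
      rw [e1, e2]
      field_simp
      ring
    have hrw : (∫ v in z..s, ∫ u in z..t, (max u v - z) ^ (1 - β)) =
        ∫ v in z..s, ((1 - 1/(2-β)) * (v - z) ^ (2 - β) + (t - z) ^ (2 - β) / (2 - β)) := by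
      apply intervalIntegral.integral_congr_ae
      filter_upwards with v hv
      rw [Set.uIoc_of_le hzs] at hv
      exact inner_eq v hv
    rw [hrw]
    have hint : IntervalIntegrable (fun v : ℝ => (v - z) ^ (2 - β)) volume z s := by
      have h := (intervalIntegral.intervalIntegrable_rpow' (a := 0) (b := s - z)
        (r := 2 - β) (by linarith)).comp_sub_right z
      simpa using h
    rw [intervalIntegral.integral_add (hint.const_mul _) intervalIntegrable_const,
      intervalIntegral.integral_const_mul, intervalIntegral.integral_const]
    have key : (∫ v in z..s, (v - z) ^ (2 - β)) = (s - z) ^ (3 - β) / (3 - β) := by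
      rw [intervalIntegral.integral_comp_sub_right (fun x => x ^ (2 - β)) z]
      rw [integral_rpow (Or.inl (by linarith))]
      rw [sub_self, show (2:ℝ) - β + 1 = 3 - β by ring, Real.zero_rpow h3β]
      ring
    rw [key, smul_eq_mul]
    have hpow : (s - z) ^ ((3:ℝ) - β) = (s - z) * (s - z) ^ ((2:ℝ) - β) := by
      rw [show (3:ℝ) - β = 1 + (2 - β) by ring, Real.rpow_add hsz, Real.rpow_one]
    rw [hpow]
    have hβ2' : β - 2 ≠ 0 := by intro h; apply h2β; linarith
    generalize (s - z) ^ ((2:ℝ) - β) = A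
    generalize (t - z) ^ ((2:ℝ) - β) = T
    field_simp
    ring
end

section
/- Let β ∈ (2,3), θ > 0, and let φ : [0,∞) → (0,∞) be measurable with K₁ := sup_{z≥0} φ(z) < ∞. For 0 ≤ s ≤ t, θ^{1-β} ∫_s^t ∫_s^t ∫₀^{u∧v} φ(z)(u∨v - z)^{1-β} dz du dv ≤ (2K₁θ^{1-β} / ((β-2)(3-β)(4-β))) (t-s)^{4-β}. -/
open Real Set MeasureTheory

/-- Compute the elementary integral `∫ z in 0..m, (M - z)^(1-β)`. -/
lemma aux_inner_eq (β : ℝ) (hβ : β ∈ Set.Ioo (2:ℝ) 3) (m M : ℝ) (h0 : 0 ≤ m) (hmM : m < M) :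
    ∫ z in (0:ℝ)..m, (M - z) ^ (1 - β)
      = (M ^ (2 - β) - (M - m) ^ (2 - β)) / (2 - β) := by
  have h1 : (∫ z in (0:ℝ)..m, (M - z) ^ (1 - β))
      = ∫ x in (M - m)..(M - 0), x ^ (1 - β) :=
    intervalIntegral.integral_comp_sub_left (fun x => x ^ (1 - β)) M
  have hM : 0 < M - m := by linarith
  have h0M : (0:ℝ) ∉ Set.uIcc (M - m) (M - 0) := by
    rw [Set.mem_uIcc]
    push_neg
    constructor <;> intro h <;> linarith
  rw [h1, integral_rpow (Or.inr ⟨by intro h; rw [Set.mem_Ioo] at hβ; linarith, h0M⟩)]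
  have h2 : 1 - β + 1 = 2 - β := by ring
  rw [h2, sub_zero]

/-- Bound for the innermost integral. -/
lemma aux_step1 (β K₁ : ℝ) (hβ : β ∈ Set.Ioo (2:ℝ) 3) (φ : ℝ → ℝ)
    (hφpos : ∀ z ∈ Ici (0:ℝ), 0 < φ z) (hφbd : ∀ z ∈ Ici (0:ℝ), φ z ≤ K₁)
    (m M : ℝ) (h0 : 0 ≤ m) (hmM : m < M) :
    (∫ z in (0:ℝ)..m, φ z * (M - z) ^ (1 - β))
      ≤ K₁ / (β - 2) * (M - m) ^ (2 - β) := by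
  obtain ⟨hβ2, hβ3⟩ := hβ
  have hK : 0 ≤ K₁ :=
    le_trans (hφpos 0 (Set.mem_Ici.mpr le_rfl)).le (hφbd 0 (Set.mem_Ici.mpr le_rfl))
  have hg : IntegrableOn (fun z => K₁ * (M - z) ^ (1 - β)) (Set.Ioc 0 m) := by
    apply (ContinuousOn.integrableOn_Icc ?_).mono_set Set.Ioc_subset_Icc_self
    apply ContinuousOn.mul continuousOn_const
    intro z hz
    apply ContinuousAt.continuousWithinAt
    apply ContinuousAt.rpow_const (by fun_prop)
    left
    rw [Set.mem_Icc] at hz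
    intro h; linarith [hz.2]
  rw [intervalIntegral.integral_of_le h0]
  calc (∫ z in Set.Ioc 0 m, φ z * (M - z) ^ (1 - β))
      ≤ ∫ z in Set.Ioc 0 m, K₁ * (M - z) ^ (1 - β) := by
        apply integral_mono_of_nonneg
        · filter_upwards [ae_restrict_mem measurableSet_Ioc] with z hz
          exact mul_nonneg (hφpos z hz.1.le).le (Real.rpow_nonneg (by linarith [hz.2]) _)
        · exact hg
        · filter_upwards [ae_restrict_mem measurableSet_Ioc] with z hz
          exact mul_le_mul_of_nonneg_right (hφbd z hz.1.le)
            (Real.rpow_nonneg (by linarith [hz.2]) _)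
    _ = K₁ * ∫ z in (0:ℝ)..m, (M - z) ^ (1 - β) := by
        rw [intervalIntegral.integral_of_le h0, MeasureTheory.integral_const_mul]
    _ ≤ K₁ / (β - 2) * (M - m) ^ (2 - β) := by
        rw [aux_inner_eq β ⟨hβ2, hβ3⟩ m M h0 hmM]
        have hMpos : 0 < M := lt_of_le_of_lt h0 hmM
        have hM2 : 0 ≤ M ^ (2 - β) := Real.rpow_nonneg hMpos.le _
        have heq : (M ^ (2 - β) - (M - m) ^ (2 - β)) / (2 - β)
            = ((M - m) ^ (2 - β) - M ^ (2 - β)) / (β - 2) := by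
          rw [div_eq_div_iff (by linarith) (by linarith)]; ring
        rw [heq]
        calc K₁ * (((M - m) ^ (2 - β) - M ^ (2 - β)) / (β - 2))
            ≤ K₁ * ((M - m) ^ (2 - β) / (β - 2)) := by
              gcongr
              · linarith
          _ = K₁ / (β - 2) * (M - m) ^ (2 - β) := by ring

/-- `v ↦ |u - v| ^ c` on `[x, u]` (with `x ≤ u`): integrability and value. -/
lemma aux_abs_left (c u x : ℝ) (hc : -1 < c) (hxu : x ≤ u) :
    IntervalIntegrable (fun v => |u - v| ^ c) volume x u ∧
      (∫ v in x..u, |u - v| ^ c) = (u - x) ^ (c + 1) / (c + 1) := by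
  have heq : Set.EqOn (fun v => |u - v| ^ c) (fun v => (u - v) ^ c) (Set.uIcc x u) := by
    intro v hv
    rw [Set.uIcc_of_le hxu, Set.mem_Icc] at hv
    simp only
    rw [abs_of_nonneg (by linarith [hv.2])]
  have hint : IntervalIntegrable (fun v => (u - v) ^ c) volume x u := by
    have h1 : IntervalIntegrable (fun w : ℝ => w ^ c) volume (u - x) (u - u) :=
      intervalIntegral.intervalIntegrable_rpow' hc
    have h2 := h1.comp_sub_left u
    simpa using h2
  constructor
  · apply (intervalIntegrable_iff.mpr ?_)
    apply (intervalIntegrable_iff.mp hint).congr_fun ?_ measurableSet_uIoc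
    intro v hv
    exact (heq (Set.uIoc_subset_uIcc hv)).symm
  · rw [intervalIntegral.integral_congr heq]
    have h3 : (∫ v in x..u, (u - v) ^ c) = ∫ w in (u - u)..(u - x), w ^ c :=
      intervalIntegral.integral_comp_sub_left (fun w => w ^ c) u
    rw [h3, sub_self, integral_rpow (Or.inl hc), Real.zero_rpow (by linarith), sub_zero]

/-- `v ↦ |u - v| ^ c` on `[u, y]` (with `u ≤ y`): integrability and value. -/
lemma aux_abs_right (c u y : ℝ) (hc : -1 < c) (huy : u ≤ y) :
    IntervalIntegrable (fun v => |u - v| ^ c) volume u y ∧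
      (∫ v in u..y, |u - v| ^ c) = (y - u) ^ (c + 1) / (c + 1) := by
  have heq : Set.EqOn (fun v => |u - v| ^ c) (fun v => (v - u) ^ c) (Set.uIcc u y) := by
    intro v hv
    rw [Set.uIcc_of_le huy, Set.mem_Icc] at hv
    simp only
    rw [abs_sub_comm, abs_of_nonneg (by linarith [hv.1])]
  have hint : IntervalIntegrable (fun v => (v - u) ^ c) volume u y := by
    have h1 : IntervalIntegrable (fun w : ℝ => w ^ c) volume (u - u) (y - u) :=
      intervalIntegral.intervalIntegrable_rpow' hc
    have h2 := h1.comp_sub_right u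
    simpa using h2
  constructor
  · apply (intervalIntegrable_iff.mpr ?_)
    apply (intervalIntegrable_iff.mp hint).congr_fun ?_ measurableSet_uIoc
    intro v hv
    exact (heq (Set.uIoc_subset_uIcc hv)).symm
  · rw [intervalIntegral.integral_congr heq]
    have h3 : (∫ v in u..y, (v - u) ^ c) = ∫ w in (u - u)..(y - u), w ^ c :=
      intervalIntegral.integral_comp_sub_right (fun w => w ^ c) u
    rw [h3, sub_self, integral_rpow (Or.inl hc), Real.zero_rpow (by linarith), sub_zero]

/-- Nonnegativity of the innermost integral. -/
lemma aux_inner_nonneg (β : ℝ) (φ : ℝ → ℝ)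
    (hφpos : ∀ z ∈ Ici (0:ℝ), 0 < φ z) (u v : ℝ) (hu : 0 ≤ u) (hv : 0 ≤ v) :
    0 ≤ ∫ z in (0:ℝ)..(min u v), φ z * (max u v - z) ^ (1 - β) := by
  apply intervalIntegral.integral_nonneg (le_min hu hv)
  intro z hz
  rw [Set.mem_Icc] at hz
  exact mul_nonneg (hφpos z hz.1).le
    (Real.rpow_nonneg (by linarith [hz.2, min_le_max (a := u) (b := v)]) _)

/-- Bound for the middle integral. -/
lemma aux_step2 (β K₁ : ℝ) (hβ : β ∈ Set.Ioo (2:ℝ) 3) (φ : ℝ → ℝ)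
    (hφpos : ∀ z ∈ Ici (0:ℝ), 0 < φ z) (hφbd : ∀ z ∈ Ici (0:ℝ), φ z ≤ K₁)
    (s t u : ℝ) (hs : 0 ≤ s) (hst : s ≤ t) (hu : u ∈ Set.Icc s t) :
    (∫ v in s..t, ∫ z in (0:ℝ)..(min u v), φ z * (max u v - z) ^ (1 - β))
      ≤ K₁ / (β - 2) / (3 - β) * ((u - s) ^ (3 - β) + (t - u) ^ (3 - β)) := by
  obtain ⟨hβ2, hβ3⟩ := hβ
  obtain ⟨hsu, hut⟩ := hu
  have hK : 0 ≤ K₁ :=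
    le_trans (hφpos 0 (Set.mem_Ici.mpr le_rfl)).le (hφbd 0 (Set.mem_Ici.mpr le_rfl))
  have hc : (-1:ℝ) < 2 - β := by linarith
  obtain ⟨hIl, hVl⟩ := aux_abs_left (2 - β) u s hc hsu
  obtain ⟨hIr, hVr⟩ := aux_abs_right (2 - β) u t hc hut
  have hIg : IntervalIntegrable (fun v => |u - v| ^ (2 - β)) volume s t := hIl.trans hIr
  have hIg' : IntervalIntegrable (fun v => K₁ / (β - 2) * |u - v| ^ (2 - β)) volume s t :=
    hIg.const_mul _
  have hne : ∀ᵐ v : ℝ, v ≠ u := by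
    rw [ae_iff]
    have : {v : ℝ | ¬ v ≠ u} = {u} := by ext v; simp
    rw [this]
    exact Real.volume_singleton
  rw [intervalIntegral.integral_of_le hst]
  calc (∫ v in Set.Ioc s t, ∫ z in (0:ℝ)..(min u v), φ z * (max u v - z) ^ (1 - β))
      ≤ ∫ v in Set.Ioc s t, K₁ / (β - 2) * |u - v| ^ (2 - β) := by
        apply integral_mono_of_nonneg
        · filter_upwards [ae_restrict_mem measurableSet_Ioc] with v hv
          exact aux_inner_nonneg β φ hφpos u v (le_trans hs hsu) (le_trans hs hv.1.le)
        · exact (intervalIntegrable_iff_integrableOn_Ioc_of_le hst).mp hIg'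
        · filter_upwards [ae_restrict_mem measurableSet_Ioc, ae_restrict_of_ae hne] with v hv hvu
          rcases lt_or_gt_of_ne hvu with h | h
          · -- v < u
            rw [min_eq_right h.le, max_eq_left h.le, abs_of_nonneg (by linarith)]
            exact aux_step1 β K₁ ⟨hβ2, hβ3⟩ φ hφpos hφbd v u (le_trans hs hv.1.le) h
          · -- u < v
            rw [min_eq_left h.le, max_eq_right h.le, abs_of_nonpos (by linarith),
              neg_sub]
            exact aux_step1 β K₁ ⟨hβ2, hβ3⟩ φ hφpos hφbd u v (le_trans hs hsu) h
    _ = K₁ / (β - 2) * ∫ v in s..t, |u - v| ^ (2 - β) := by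
        rw [intervalIntegral.integral_of_le hst, MeasureTheory.integral_const_mul]
    _ ≤ K₁ / (β - 2) / (3 - β) * ((u - s) ^ (3 - β) + (t - u) ^ (3 - β)) := by
        rw [← intervalIntegral.integral_add_adjacent_intervals hIl hIr, hVl, hVr]
        have h23 : (2:ℝ) - β + 1 = 3 - β := by ring
        rw [h23]
        apply le_of_eq
        field_simp

theorem stmt_15 (β θ K₁ : ℝ) (hβ : β ∈ Set.Ioo (2:ℝ) 3) (hθ : 0 < θ)
    (φ : ℝ → ℝ) (hφmeas : Measurable φ)
    (hφpos : ∀ z ∈ Ici (0:ℝ), 0 < φ z)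
    (hφbd : ∀ z ∈ Ici (0:ℝ), φ z ≤ K₁)
    (s t : ℝ) (hs : 0 ≤ s) (hst : s ≤ t) :
    θ ^ (1 - β) *
      (∫ u in s..t, ∫ v in s..t, ∫ z in (0:ℝ)..(min u v),
        φ z * (max u v - z) ^ (1 - β))
      ≤ (2 * K₁ * θ ^ (1 - β) / ((β - 2) * (3 - β) * (4 - β))) *
          (t - s) ^ (4 - β) := by
  obtain ⟨hβ2, hβ3⟩ := hβ
  have hK : 0 ≤ K₁ :=
    le_trans (hφpos 0 (Set.mem_Ici.mpr le_rfl)).le (hφbd 0 (Set.mem_Ici.mpr le_rfl))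
  have hθp : 0 < θ ^ (1 - β) := Real.rpow_pos_of_pos hθ _
  set C : ℝ := K₁ / (β - 2) / (3 - β) with hC
  have hcont1 : Continuous (fun u : ℝ => (u - s) ^ (3 - β)) := by
    rw [continuous_iff_continuousAt]
    intro x
    exact ContinuousAt.rpow_const (by fun_prop) (Or.inr (by linarith))
  have hcont2 : Continuous (fun u : ℝ => (t - u) ^ (3 - β)) := by
    rw [continuous_iff_continuousAt]
    intro x
    exact ContinuousAt.rpow_const (by fun_prop) (Or.inr (by linarith))
  have hG : Continuous (fun u : ℝ => C * ((u - s) ^ (3 - β) + (t - u) ^ (3 - β))) :=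
    continuous_const.mul (hcont1.add hcont2)
  have hmono :
      (∫ u in s..t, ∫ v in s..t, ∫ z in (0:ℝ)..(min u v), φ z * (max u v - z) ^ (1 - β))
        ≤ ∫ u in s..t, C * ((u - s) ^ (3 - β) + (t - u) ^ (3 - β)) := by
    rw [intervalIntegral.integral_of_le hst, intervalIntegral.integral_of_le hst]
    apply integral_mono_of_nonneg
    · filter_upwards [ae_restrict_mem measurableSet_Ioc] with u hu
      apply intervalIntegral.integral_nonneg hst
      intro v hv
      exact aux_inner_nonneg β φ hφpos u v (le_trans hs hu.1.le) (le_trans hs hv.1)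
    · exact hG.integrableOn_Ioc
    · filter_upwards [ae_restrict_mem measurableSet_Ioc] with u hu
      exact aux_step2 β K₁ ⟨hβ2, hβ3⟩ φ hφpos hφbd s t u hs hst ⟨hu.1.le, hu.2⟩
  have hval : (∫ u in s..t, C * ((u - s) ^ (3 - β) + (t - u) ^ (3 - β)))
      = C * (2 * ((t - s) ^ (4 - β) / (4 - β))) := by
    rw [intervalIntegral.integral_const_mul]
    have hi1 : IntervalIntegrable (fun u : ℝ => (u - s) ^ (3 - β)) volume s t :=
      hcont1.intervalIntegrable s t
    have hi2 : IntervalIntegrable (fun u : ℝ => (t - u) ^ (3 - β)) volume s t :=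
      hcont2.intervalIntegrable s t
    rw [intervalIntegral.integral_add hi1 hi2]
    have hv1 : (∫ u in s..t, (u - s) ^ (3 - β)) = (t - s) ^ (4 - β) / (4 - β) := by
      have h3 : (∫ u in s..t, (u - s) ^ (3 - β)) = ∫ x in (s - s)..(t - s), x ^ (3 - β) :=
        intervalIntegral.integral_comp_sub_right (fun w => w ^ (3 - β)) s
      rw [h3, sub_self, integral_rpow (Or.inl (by linarith)),
        Real.zero_rpow (by intro h; linarith), sub_zero,
        show (3:ℝ) - β + 1 = 4 - β by ring]
    have hv2 : (∫ u in s..t, (t - u) ^ (3 - β)) = (t - s) ^ (4 - β) / (4 - β) := by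
      have h3 : (∫ u in s..t, (t - u) ^ (3 - β)) = ∫ x in (t - t)..(t - s), x ^ (3 - β) :=
        intervalIntegral.integral_comp_sub_left (fun w => w ^ (3 - β)) t
      rw [h3, sub_self, integral_rpow (Or.inl (by linarith)),
        Real.zero_rpow (by intro h; linarith), sub_zero,
        show (3:ℝ) - β + 1 = 4 - β by ring]
    rw [hv1, hv2]
    ring
  calc θ ^ (1 - β) *
      (∫ u in s..t, ∫ v in s..t, ∫ z in (0:ℝ)..(min u v), φ z * (max u v - z) ^ (1 - β))
      ≤ θ ^ (1 - β) * (C * (2 * ((t - s) ^ (4 - β) / (4 - β)))) := by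
        rw [← hval]
        exact mul_le_mul_of_nonneg_left hmono hθp.le
    _ = (2 * K₁ * θ ^ (1 - β) / ((β - 2) * (3 - β) * (4 - β))) * (t - s) ^ (4 - β) := by
        rw [hC]
        field_simp
end

section
/- Let β ∈ (2,3) and κ > 0. Then for all T ≥ 0, (1/(β-2)) e^{-2κT} ∫₀^T ∫₀^T e^{κu} e^{κv} |u-v|^{2-β} du dv ≤ 2Γ(4-β)/((β-2)(3-β)κ^{4-β}), and this expression, which equals (1/(β-2)) ∫₀^T ∫₀^T e^{-κu}e^{-κv}|u-v|^{2-β} du dv, is nondecreasing in T and converges as T → ∞ to (1/(β-2)) ∫₀^∞ ∫₀^∞ e^{-κu}e^{-κv}|u-v|^{2-β} du dv < ∞. -/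
open Real Set MeasureTheory Filter


lemma stmt16_shift_int {f : ℝ → ℝ} (u : ℝ) (hf : IntegrableOn f (Ioi (0:ℝ))) :
    IntegrableOn (fun v => f (v - u)) (Ioi u) := by
  have emb : MeasurableEmbedding (fun x : ℝ => x + u) :=
    (MeasurableEquiv.addRight u).measurableEmbedding
  have mp : MeasurePreserving (fun x : ℝ => x + u) volume volume :=
    measurePreserving_add_right volume u
  have h1 : (fun x : ℝ => x + u) ⁻¹' (Ioi u) = Ioi 0 := by ext x; simp
  have h2 := mp.restrict_preimage_emb emb (Ioi u)
  rw [h1] at h2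
  have h3 := h2.integrable_comp_emb emb (g := fun v => f (v - u))
  rw [IntegrableOn, ← h3]
  simpa [Function.comp_def, add_sub_cancel_right, IntegrableOn] using hf

lemma stmt16_shift_eq (f : ℝ → ℝ) (u : ℝ) :
    ∫ v in Ioi u, f (v - u) = ∫ x in Ioi (0:ℝ), f x := by
  have emb : MeasurableEmbedding (fun x : ℝ => x + u) :=
    (MeasurableEquiv.addRight u).measurableEmbedding
  have mp : MeasurePreserving (fun x : ℝ => x + u) volume volume :=
    measurePreserving_add_right volume u
  have h1 : (fun x : ℝ => x + u) ⁻¹' (Ioi u) = Ioi 0 := by ext x; simp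
  have := mp.setIntegral_preimage_emb emb (fun v => f (v - u)) (Ioi u)
  rw [h1] at this
  simpa using this.symm

section
variable {β κ : ℝ}

lemma stmt16_intA (hβ3 : β < 3) (hκ : 0 < κ) :
    IntegrableOn (fun x : ℝ => x ^ (2-β) * exp (-(κ * x))) (Ioi 0) := by
  have h := integrableOn_rpow_mul_exp_neg_mul_rpow (s := 2-β) (p := 1) (b := κ)
    (by linarith) one_pos hκ
  exact h.congr_fun (fun x _ => by dsimp only; rw [Real.rpow_one]; ring_nf) measurableSet_Ioi

lemma stmt16_valA (hβ3 : β < 3) (hκ : 0 < κ) :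
    ∫ x in Ioi (0:ℝ), x ^ (2-β) * exp (-(κ * x)) = (1/κ)^(3-β) * Real.Gamma (3-β) := by
  have h := integral_rpow_mul_exp_neg_mul_Ioi (a := 3-β) (r := κ) (by linarith) hκ
  rw [show (3-β)-1 = 2-β by ring] at h
  exact h

lemma stmt16_intB (hβ3 : β < 3) (hκ : 0 < κ) :
    IntegrableOn (fun x : ℝ => x ^ (3-β) * exp (-(κ * x))) (Ioi 0) := by
  have h := integrableOn_rpow_mul_exp_neg_mul_rpow (s := 3-β) (p := 1) (b := κ)
    (by linarith) one_pos hκ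
  exact h.congr_fun (fun x _ => by dsimp only; rw [Real.rpow_one]; ring_nf) measurableSet_Ioi

lemma stmt16_valB (hβ3 : β < 3) (hκ : 0 < κ) :
    ∫ x in Ioi (0:ℝ), x ^ (3-β) * exp (-(κ * x)) = (1/κ)^(4-β) * Real.Gamma (4-β) := by
  have h := integral_rpow_mul_exp_neg_mul_Ioi (a := 4-β) (r := κ) (by linarith) hκ
  rw [show (4-β)-1 = 3-β by ring] at h
  exact h

lemma stmt16_intE (hκ : 0 < κ) :
    IntegrableOn (fun x : ℝ => exp (-(κ * x))) (Ioi 0) := by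
  have h := integrableOn_rpow_mul_exp_neg_mul_rpow (s := 0) (p := 1) (b := κ)
    (by norm_num) one_pos hκ
  exact h.congr_fun (fun x _ => by dsimp only; rw [Real.rpow_one, Real.rpow_zero, one_mul]; ring_nf)
    measurableSet_Ioi

lemma stmt16_valE (hκ : 0 < κ) :
    ∫ x in Ioi (0:ℝ), exp (-(κ * x)) = 1/κ := by
  have h := integral_rpow_mul_exp_neg_mul_Ioi (a := 1) (r := κ) one_pos hκ
  simpa [Real.rpow_zero, Real.rpow_one, Real.Gamma_one] using h

-- integrability of the Ioc piece
lemma stmt16_intIoc (hβ3 : β < 3) {u : ℝ} (hu : 0 < u) :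
    IntegrableOn (fun v : ℝ => (u - v) ^ (2-β)) (Ioc 0 u) := by
  have h1 : IntervalIntegrable (fun x : ℝ => x ^ (2-β)) volume 0 u :=
    intervalIntegral.intervalIntegrable_rpow' (by linarith)
  have h2 := h1.comp_sub_left u
  rw [sub_zero, sub_self] at h2
  have h3 := h2.symm
  rwa [intervalIntegrable_iff_integrableOn_Ioc_of_le hu.le] at h3

lemma stmt16_valIoc (hβ2 : 2 < β) (hβ3 : β < 3) {u : ℝ} (hu : 0 < u) :
    ∫ v in Ioc (0:ℝ) u, (u - v) ^ (2-β) = u ^ (3-β) / (3-β) := by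
  rw [← intervalIntegral.integral_of_le hu.le]
  rw [intervalIntegral.integral_comp_sub_left (fun x : ℝ => x ^ (2-β)) u]
  rw [sub_zero, sub_self]
  rw [integral_rpow (Or.inl (by linarith))]
  rw [Real.zero_rpow (by intro h; nlinarith [h] : (2-β)+1 ≠ 0)]
  rw [show (2-β)+1 = 3-β by ring]
  ring

-- the shifted integrand on Ioi u
lemma stmt16_eqOn (hκ : 0 < κ) (u : ℝ) :
    EqOn (fun v => (fun w : ℝ => exp (-(κ*u)) * (w ^ (2-β) * exp (-(κ * w)))) (v - u))
      (fun v : ℝ => exp (-(κ * v)) * |u - v| ^ (2-β)) (Ioi u) := by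
  intro v hv
  simp only [mem_Ioi] at hv
  have h0 : |u - v| = v - u := by rw [abs_sub_comm]; exact abs_of_pos (by linarith)
  simp only [h0]
  rw [show exp (-(κ * v)) = exp (-(κ*u)) * exp (-(κ*(v-u))) by
    rw [← Real.exp_add]; congr 1; ring]
  ring

lemma stmt16_innerInt (hβ2 : 2 < β) (hβ3 : β < 3) (hκ : 0 < κ) {u : ℝ} (hu : 0 < u) :
    IntegrableOn (fun v : ℝ => exp (-(κ * v)) * |u - v| ^ (2-β)) (Ioi 0) := by
  rw [← Ioc_union_Ioi_eq_Ioi hu.le]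
  apply IntegrableOn.union
  · refine Integrable.mono' (stmt16_intIoc hβ3 hu) ?_ ?_
    · apply Measurable.aestronglyMeasurable
      fun_prop
    · filter_upwards [ae_restrict_mem measurableSet_Ioc] with v hv
      have h0 : |u - v| = u - v := abs_of_nonneg (by linarith [hv.2])
      rw [Real.norm_eq_abs, abs_of_nonneg (by positivity), h0]
      exact mul_le_of_le_one_left (Real.rpow_nonneg (by linarith [hv.1, hv.2]) _)
        (Real.exp_le_one_iff.mpr (by nlinarith [hv.1]))
  · have hf0 : IntegrableOn (fun w : ℝ => exp (-(κ*u)) * (w ^ (2-β) * exp (-(κ * w)))) (Ioi 0) :=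
      (stmt16_intA hβ3 hκ).const_mul _ |>.congr
        (Filter.Eventually.of_forall (fun w => by ring))
    exact (stmt16_shift_int u hf0).congr_fun (stmt16_eqOn hκ u) measurableSet_Ioi

lemma stmt16_innerBound (hβ2 : 2 < β) (hβ3 : β < 3) (hκ : 0 < κ) {u : ℝ} (hu : 0 < u) :
    ∫ v in Ioi (0:ℝ), exp (-(κ * v)) * |u - v| ^ (2-β)
      ≤ u ^ (3-β) / (3-β) + (1/κ)^(3-β) * Real.Gamma (3-β) := by
  have hIoc : IntegrableOn (fun v : ℝ => exp (-(κ * v)) * |u - v| ^ (2-β)) (Ioc 0 u) :=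
    ((stmt16_innerInt hβ2 hβ3 hκ hu).mono_set Ioc_subset_Ioi_self)
  have hIoi : IntegrableOn (fun v : ℝ => exp (-(κ * v)) * |u - v| ^ (2-β)) (Ioi u) :=
    ((stmt16_innerInt hβ2 hβ3 hκ hu).mono_set (Ioi_subset_Ioi hu.le))
  rw [← Ioc_union_Ioi_eq_Ioi hu.le,
    setIntegral_union (Set.Ioc_disjoint_Ioi le_rfl) measurableSet_Ioi hIoc hIoi]
  have b1 : ∫ v in Ioc (0:ℝ) u, exp (-(κ * v)) * |u - v| ^ (2-β) ≤ u ^ (3-β) / (3-β) := by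
    rw [← stmt16_valIoc hβ2 hβ3 hu]
    refine setIntegral_mono_on hIoc (stmt16_intIoc hβ3 hu) measurableSet_Ioc ?_
    intro v hv
    have h0 : |u - v| = u - v := abs_of_nonneg (by linarith [hv.2])
    rw [h0]
    exact mul_le_of_le_one_left (Real.rpow_nonneg (by linarith [hv.1, hv.2]) _)
      (Real.exp_le_one_iff.mpr (by nlinarith [hv.1]))
  have b2 : ∫ v in Ioi u, exp (-(κ * v)) * |u - v| ^ (2-β)
      ≤ (1/κ)^(3-β) * Real.Gamma (3-β) := by
    rw [← setIntegral_congr_fun measurableSet_Ioi (stmt16_eqOn hκ u)]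
    rw [stmt16_shift_eq (fun w : ℝ => exp (-(κ*u)) * (w ^ (2-β) * exp (-(κ * w)))) u]
    rw [integral_const_mul, stmt16_valA hβ3 hκ]
    calc exp (-(κ*u)) * ((1/κ)^(3-β) * Real.Gamma (3-β))
        ≤ 1 * ((1/κ)^(3-β) * Real.Gamma (3-β)) := by
          apply mul_le_mul_of_nonneg_right (Real.exp_le_one_iff.mpr (by nlinarith))
          exact mul_nonneg (Real.rpow_nonneg (by positivity) _)
            (Real.Gamma_nonneg_of_nonneg (by linarith))
      _ = (1/κ)^(3-β) * Real.Gamma (3-β) := one_mul _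
  linarith

-- the dominating function
noncomputable def stmt16C (β κ : ℝ) (u : ℝ) : ℝ :=
  exp (-(κ * u)) * (u ^ (3-β) / (3-β) + (1/κ)^(3-β) * Real.Gamma (3-β))

lemma stmt16_intCfun (hβ3 : β < 3) (hκ : 0 < κ) :
    IntegrableOn (stmt16C β κ) (Ioi 0) := by
  have h : IntegrableOn (fun u : ℝ =>
      (1/(3-β)) * (u ^ (3-β) * exp (-(κ * u)))
        + ((1/κ)^(3-β) * Real.Gamma (3-β)) * exp (-(κ * u))) (Ioi 0) :=
    ((stmt16_intB hβ3 hκ).const_mul _).add ((stmt16_intE hκ).const_mul _)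
  exact h.congr_fun (fun u _ => by unfold stmt16C; ring) measurableSet_Ioi

lemma stmt16_valCfun (hβ2 : 2 < β) (hβ3 : β < 3) (hκ : 0 < κ) :
    ∫ u in Ioi (0:ℝ), stmt16C β κ u
      = 2 * Real.Gamma (4-β) / ((3-β) * κ ^ (4-β)) := by
  have h3ne : (3:ℝ) - β ≠ 0 := by intro h; nlinarith
  have hκ43 : κ ^ ((4:ℝ)-β) = κ ^ ((3:ℝ)-β) * κ := by
    rw [show (4:ℝ)-β = (3-β)+1 by ring, Real.rpow_add hκ, Real.rpow_one]
  have hGam : Real.Gamma (4-β) = (3-β) * Real.Gamma (3-β) := by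
    rw [show (4:ℝ)-β = (3-β)+1 by ring, Real.Gamma_add_one h3ne]
  calc ∫ u in Ioi (0:ℝ), stmt16C β κ u
      = ∫ u in Ioi (0:ℝ), ((1/(3-β)) * (u ^ (3-β) * exp (-(κ * u)))
          + ((1/κ)^(3-β) * Real.Gamma (3-β)) * exp (-(κ * u))) := by
        refine setIntegral_congr_fun measurableSet_Ioi (fun u _ => ?_)
        unfold stmt16C; ring
    _ = (1/(3-β)) * ((1/κ)^(4-β) * Real.Gamma (4-β))
          + ((1/κ)^(3-β) * Real.Gamma (3-β)) * (1/κ) := by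
        rw [integral_add (((stmt16_intB hβ3 hκ).const_mul _))
          ((stmt16_intE hκ).const_mul _), integral_const_mul, integral_const_mul,
          stmt16_valB hβ3 hκ, stmt16_valE hκ]
    _ = 2 * Real.Gamma (4-β) / ((3-β) * κ ^ (4-β)) := by
        rw [hGam, one_div κ, Real.inv_rpow hκ.le, Real.inv_rpow hκ.le, hκ43]
        have hk3 : κ ^ ((3:ℝ)-β) ≠ 0 := by positivity
        field_simp
        ring

-- slice bound
lemma stmt16_sliceBound (hβ2 : 2 < β) (hβ3 : β < 3) (hκ : 0 < κ) {u : ℝ} (hu : 0 < u) :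
    ∫ v in Ioi (0:ℝ), exp (-(κ * u)) * exp (-(κ * v)) * |u - v| ^ (2-β)
      ≤ stmt16C β κ u := by
  have h1 : ∀ v : ℝ, exp (-(κ * u)) * exp (-(κ * v)) * |u - v| ^ (2-β)
      = exp (-(κ * u)) * (exp (-(κ * v)) * |u - v| ^ (2-β)) := fun v => by ring
  simp_rw [h1]
  rw [integral_const_mul]
  exact mul_le_mul_of_nonneg_left (stmt16_innerBound hβ2 hβ3 hκ hu) (exp_nonneg _)

lemma stmt16_measG : Measurable (fun p : ℝ × ℝ =>
    exp (-(κ * p.1)) * exp (-(κ * p.2)) * |p.1 - p.2| ^ (2 - β)) := by fun_prop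

lemma stmt16_prodInt (hβ2 : 2 < β) (hβ3 : β < 3) (hκ : 0 < κ) :
    IntegrableOn (fun p : ℝ × ℝ => exp (-(κ * p.1)) * exp (-(κ * p.2)) * |p.1 - p.2| ^ (2 - β))
      (Set.Ioi (0:ℝ) ×ˢ Set.Ioi (0:ℝ)) := by
  set g := fun p : ℝ × ℝ => exp (-(κ * p.1)) * exp (-(κ * p.2)) * |p.1 - p.2| ^ (2 - β) with hg
  have hgnn : ∀ p : ℝ × ℝ, 0 ≤ g p := fun p => by positivity
  rw [IntegrableOn, Measure.volume_eq_prod, ← Measure.prod_restrict]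
  have hmeas : AEStronglyMeasurable g
      ((volume.restrict (Ioi 0)).prod (volume.restrict (Ioi 0))) :=
    stmt16_measG.aestronglyMeasurable
  rw [integrable_prod_iff hmeas]
  constructor
  · filter_upwards [ae_restrict_mem measurableSet_Ioi] with u hu
    refine ((stmt16_innerInt hβ2 hβ3 hκ hu).const_mul (exp (-(κ * u)))).congr
      (Filter.Eventually.of_forall (fun v => ?_))
    show exp (-(κ * u)) * (exp (-(κ * v)) * |u - v| ^ (2 - β)) = g (u, v)
    simp only [hg]; ring
  · refine Integrable.mono' (stmt16_intCfun hβ3 hκ)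
      (hmeas.norm.integral_prod_right') ?_
    filter_upwards [ae_restrict_mem measurableSet_Ioi] with u hu
    have hrw : ∫ v in Ioi (0:ℝ), ‖g (u, v)‖ = ∫ v in Ioi (0:ℝ), g (u, v) := by
      refine setIntegral_congr_fun measurableSet_Ioi (fun v _ => ?_)
      exact Real.norm_of_nonneg (hgnn (u, v))
    rw [Real.norm_of_nonneg (integral_nonneg (fun v => norm_nonneg _)), hrw]
    exact stmt16_sliceBound hβ2 hβ3 hκ hu

lemma stmt16_prodBound (hβ2 : 2 < β) (hβ3 : β < 3) (hκ : 0 < κ) :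
    ∫ p in Set.Ioi (0:ℝ) ×ˢ Set.Ioi (0:ℝ),
        exp (-(κ * p.1)) * exp (-(κ * p.2)) * |p.1 - p.2| ^ (2 - β)
      ≤ 2 * Real.Gamma (4-β) / ((3-β) * κ ^ (4-β)) := by
  have hInt := stmt16_prodInt hβ2 hβ3 hκ
  rw [Measure.volume_eq_prod] at hInt
  rw [Measure.volume_eq_prod, setIntegral_prod _ hInt]
  rw [← stmt16_valCfun hβ2 hβ3 hκ]
  refine integral_mono_of_nonneg ?_ (stmt16_intCfun hβ3 hκ) ?_
  · exact Filter.Eventually.of_forall (fun u => integral_nonneg (fun v => by positivity))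
  · filter_upwards [ae_restrict_mem measurableSet_Ioi] with u hu
    exact stmt16_sliceBound hβ2 hβ3 hκ hu

lemma stmt16_part1 (β κ T : ℝ) :
    (∫ u in (0:ℝ)..T, ∫ v in (0:ℝ)..T, exp (-(κ*u)) * exp (-(κ*v)) * |u-v|^(2-β))
      = exp (-(2*κ*T)) *
        ∫ u in (0:ℝ)..T, ∫ v in (0:ℝ)..T, exp (κ*u) * exp (κ*v) * |u-v|^(2-β) := by
  set F : ℝ → ℝ := fun c => ∫ v in (0:ℝ)..T, exp (-(κ*c)) * exp (-(κ*v)) * |c-v|^(2-β) with hF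
  have hout := intervalIntegral.integral_comp_sub_left (a := 0) (b := T) F T
  rw [sub_self, sub_zero] at hout
  have hin : ∀ c : ℝ, F c
      = ∫ v in (0:ℝ)..T, exp (-(κ*c)) * exp (-(κ*(T-v))) * |c-(T-v)|^(2-β) := by
    intro c
    have h := intervalIntegral.integral_comp_sub_left (a := 0) (b := T)
      (fun v => exp (-(κ*c)) * exp (-(κ*v)) * |c-v|^(2-β)) T
    rw [sub_self, sub_zero] at h
    exact h.symm
  have step3 : ∀ u v : ℝ, exp (-(κ*(T-u))) * exp (-(κ*(T-v))) * |(T-u)-(T-v)|^(2-β)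
      = exp (-(2*κ*T)) * (exp (κ*u) * exp (κ*v) * |u-v|^(2-β)) := by
    intro u v
    have habs : |(T-u)-(T-v)| = |u-v| := by rw [show (T-u)-(T-v) = -(u-v) by ring, abs_neg]
    rw [habs, show -(κ*(T-u)) = -(κ*T) + κ*u by ring, show -(κ*(T-v)) = -(κ*T)+κ*v by ring,
      show -(2*κ*T) = -(κ*T) + -(κ*T) by ring, Real.exp_add, Real.exp_add, Real.exp_add]
    ring
  calc (∫ u in (0:ℝ)..T, ∫ v in (0:ℝ)..T, exp (-(κ*u)) * exp (-(κ*v)) * |u-v|^(2-β))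
      = ∫ u in (0:ℝ)..T, F (T - u) := hout.symm
    _ = ∫ u in (0:ℝ)..T,
          exp (-(2*κ*T)) * ∫ v in (0:ℝ)..T, exp (κ*u) * exp (κ*v) * |u-v|^(2-β) := by
        refine intervalIntegral.integral_congr (fun u _ => ?_)
        calc F (T-u)
            = ∫ v in (0:ℝ)..T,
                exp (-(κ*(T-u))) * exp (-(κ*(T-v))) * |(T-u)-(T-v)|^(2-β) := hin (T-u)
          _ = ∫ v in (0:ℝ)..T,
                exp (-(2*κ*T)) * (exp (κ*u) * exp (κ*v) * |u-v|^(2-β)) :=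
              intervalIntegral.integral_congr (fun v _ => step3 u v)
          _ = exp (-(2*κ*T)) * ∫ v in (0:ℝ)..T, exp (κ*u) * exp (κ*v) * |u-v|^(2-β) :=
              intervalIntegral.integral_const_mul _ _
    _ = exp (-(2*κ*T)) *
          ∫ u in (0:ℝ)..T, ∫ v in (0:ℝ)..T, exp (κ*u) * exp (κ*v) * |u-v|^(2-β) :=
        intervalIntegral.integral_const_mul _ _

lemma stmt16_IocProd (hβ2 : 2 < β) (hβ3 : β < 3) (hκ : 0 < κ) {T : ℝ} (hT : 0 ≤ T) :
    (∫ u in (0:ℝ)..T, ∫ v in (0:ℝ)..T, exp (-(κ*u)) * exp (-(κ*v)) * |u-v|^(2-β))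
      = ∫ p in Ioc (0:ℝ) T ×ˢ Ioc (0:ℝ) T,
          exp (-(κ * p.1)) * exp (-(κ * p.2)) * |p.1 - p.2| ^ (2 - β) := by
  have hsub : (Ioc (0:ℝ) T ×ˢ Ioc (0:ℝ) T) ⊆ (Ioi (0:ℝ) ×ˢ Ioi (0:ℝ)) :=
    prod_mono Ioc_subset_Ioi_self Ioc_subset_Ioi_self
  have hI : IntegrableOn (fun p : ℝ × ℝ => exp (-(κ * p.1)) * exp (-(κ * p.2))
      * |p.1 - p.2| ^ (2 - β)) (Ioc 0 T ×ˢ Ioc 0 T) ((volume : Measure ℝ).prod volume) := by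
    rw [← Measure.volume_eq_prod]
    exact (stmt16_prodInt hβ2 hβ3 hκ).mono_set hsub
  rw [Measure.volume_eq_prod, setIntegral_prod _ hI]
  rw [intervalIntegral.integral_of_le hT]
  exact setIntegral_congr_fun measurableSet_Ioc
    (fun u _ => intervalIntegral.integral_of_le hT)
end

theorem stmt_16 (β κ : ℝ) (hβ : β ∈ Set.Ioo (2:ℝ) 3) (hκ : 0 < κ) :
    (∀ T ≥ (0:ℝ),
      (1 / (β - 2)) * exp (-(2 * κ * T)) *
        (∫ u in (0:ℝ)..T, ∫ v in (0:ℝ)..T,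
          exp (κ * u) * exp (κ * v) * |u - v| ^ (2 - β)) =
      (1 / (β - 2)) *
        (∫ u in (0:ℝ)..T, ∫ v in (0:ℝ)..T,
          exp (-(κ * u)) * exp (-(κ * v)) * |u - v| ^ (2 - β))) ∧
    (∀ T ≥ (0:ℝ),
      (1 / (β - 2)) * exp (-(2 * κ * T)) *
        (∫ u in (0:ℝ)..T, ∫ v in (0:ℝ)..T,
          exp (κ * u) * exp (κ * v) * |u - v| ^ (2 - β))
        ≤ 2 * Real.Gamma (4 - β) / ((β - 2) * (3 - β) * κ ^ (4 - β))) ∧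
    MonotoneOn (fun T =>
      (1 / (β - 2)) *
        ∫ u in (0:ℝ)..T, ∫ v in (0:ℝ)..T,
          exp (-(κ * u)) * exp (-(κ * v)) * |u - v| ^ (2 - β)) (Ici (0:ℝ)) ∧
    IntegrableOn
      (fun p : ℝ × ℝ => exp (-(κ * p.1)) * exp (-(κ * p.2)) * |p.1 - p.2| ^ (2 - β))
      (Set.Ioi (0:ℝ) ×ˢ Set.Ioi (0:ℝ)) ∧
    Tendsto (fun T =>
      (1 / (β - 2)) *
        ∫ u in (0:ℝ)..T, ∫ v in (0:ℝ)..T,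
          exp (-(κ * u)) * exp (-(κ * v)) * |u - v| ^ (2 - β))
      atTop
      (nhds ((1 / (β - 2)) *
        ∫ u in Set.Ioi (0:ℝ), ∫ v in Set.Ioi (0:ℝ),
          exp (-(κ * u)) * exp (-(κ * v)) * |u - v| ^ (2 - β))) := by
  obtain ⟨hβ2, hβ3⟩ := hβ
  have hb2 : (0:ℝ) < β - 2 := by linarith
  have hc : (0:ℝ) ≤ 1 / (β - 2) := by positivity
  have hprod := stmt16_prodInt (κ := κ) hβ2 hβ3 hκ
  have hgnn : ∀ p : ℝ × ℝ,
      0 ≤ exp (-(κ * p.1)) * exp (-(κ * p.2)) * |p.1 - p.2| ^ (2 - β) :=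
    fun p => by positivity
  have hIter : (∫ p in Set.Ioi (0:ℝ) ×ˢ Set.Ioi (0:ℝ),
        exp (-(κ * p.1)) * exp (-(κ * p.2)) * |p.1 - p.2| ^ (2 - β))
      = ∫ u in Set.Ioi (0:ℝ), ∫ v in Set.Ioi (0:ℝ),
          exp (-(κ * u)) * exp (-(κ * v)) * |u - v| ^ (2 - β) := by
    rw [Measure.volume_eq_prod]
    exact setIntegral_prod _ (by rw [← Measure.volume_eq_prod]; exact hprod)
  refine ⟨?_, ?_, ?_, hprod, ?_⟩
  · intro T hT
    rw [stmt16_part1 β κ T]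
    ring
  · intro T hT
    have hsub : (Ioc (0:ℝ) T ×ˢ Ioc (0:ℝ) T) ⊆ (Ioi (0:ℝ) ×ˢ Ioi (0:ℝ)) :=
      prod_mono Ioc_subset_Ioi_self Ioc_subset_Ioi_self
    calc (1 / (β - 2)) * exp (-(2 * κ * T)) *
        (∫ u in (0:ℝ)..T, ∫ v in (0:ℝ)..T,
          exp (κ * u) * exp (κ * v) * |u - v| ^ (2 - β))
        = (1 / (β - 2)) * (exp (-(2 * κ * T)) *
          ∫ u in (0:ℝ)..T, ∫ v in (0:ℝ)..T,
            exp (κ * u) * exp (κ * v) * |u - v| ^ (2 - β)) := by ring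
      _ = (1 / (β - 2)) * ∫ p in Ioc (0:ℝ) T ×ˢ Ioc (0:ℝ) T,
            exp (-(κ * p.1)) * exp (-(κ * p.2)) * |p.1 - p.2| ^ (2 - β) := by
          rw [← stmt16_part1 β κ T, stmt16_IocProd hβ2 hβ3 hκ hT]
      _ ≤ (1 / (β - 2)) * ∫ p in Set.Ioi (0:ℝ) ×ˢ Set.Ioi (0:ℝ),
            exp (-(κ * p.1)) * exp (-(κ * p.2)) * |p.1 - p.2| ^ (2 - β) := by
          refine mul_le_mul_of_nonneg_left ?_ hc
          exact setIntegral_mono_set hprod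
            (Filter.Eventually.of_forall (fun p => hgnn p))
            (HasSubset.Subset.eventuallyLE hsub)
      _ ≤ (1 / (β - 2)) * (2 * Real.Gamma (4 - β) / ((3 - β) * κ ^ (4 - β))) :=
          mul_le_mul_of_nonneg_left (stmt16_prodBound hβ2 hβ3 hκ) hc
      _ = 2 * Real.Gamma (4 - β) / ((β - 2) * (3 - β) * κ ^ (4 - β)) := by
          rw [div_mul_div_comm, one_mul, ← mul_assoc]
  · intro a ha b hb hab
    simp only
    refine mul_le_mul_of_nonneg_left ?_ hc
    rw [stmt16_IocProd hβ2 hβ3 hκ ha, stmt16_IocProd hβ2 hβ3 hκ hb]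
    refine setIntegral_mono_set
      (hprod.mono_set (prod_mono Ioc_subset_Ioi_self Ioc_subset_Ioi_self))
      (Filter.Eventually.of_forall (fun p => hgnn p))
      (HasSubset.Subset.eventuallyLE ?_)
    exact prod_mono (Ioc_subset_Ioc_right hab) (Ioc_subset_Ioc_right hab)
  · have hTend : Tendsto (fun T : ℝ => ∫ p in Set.Ioi (0:ℝ) ×ˢ Set.Ioi (0:ℝ),
        ((Ioc (0:ℝ) T ×ˢ Ioc (0:ℝ) T).indicator
          (fun p : ℝ × ℝ => exp (-(κ * p.1)) * exp (-(κ * p.2)) * |p.1 - p.2| ^ (2 - β))) p)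
        atTop (nhds (∫ p in Set.Ioi (0:ℝ) ×ˢ Set.Ioi (0:ℝ),
          exp (-(κ * p.1)) * exp (-(κ * p.2)) * |p.1 - p.2| ^ (2 - β))) := by
      refine tendsto_integral_filter_of_dominated_convergence
        (fun p : ℝ × ℝ => exp (-(κ * p.1)) * exp (-(κ * p.2)) * |p.1 - p.2| ^ (2 - β))
        (Filter.Eventually.of_forall (fun T =>
          stmt16_measG.aestronglyMeasurable.indicator
            (measurableSet_Ioc.prod measurableSet_Ioc)))
        (Filter.Eventually.of_forall (fun T =>
          Filter.Eventually.of_forall (fun p => ?_))) hprod ?_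
      · rw [Real.norm_eq_abs,
          abs_of_nonneg (Set.indicator_nonneg (fun q _ => hgnn q) p)]
        exact Set.indicator_le_self' (fun q _ => hgnn q) p
      · filter_upwards [ae_restrict_mem (measurableSet_Ioi.prod measurableSet_Ioi)] with p hp
        refine Tendsto.congr' ?_ tendsto_const_nhds
        filter_upwards [eventually_ge_atTop (max p.1 p.2)] with T hT
        have hmem : p ∈ Ioc (0:ℝ) T ×ˢ Ioc (0:ℝ) T :=
          ⟨⟨hp.1, le_trans (le_max_left _ _) hT⟩, ⟨hp.2, le_trans (le_max_right _ _) hT⟩⟩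
        exact (Set.indicator_of_mem hmem
          (fun p : ℝ × ℝ => exp (-(κ * p.1)) * exp (-(κ * p.2)) * |p.1 - p.2| ^ (2 - β))).symm
    have hEq : (fun T : ℝ => (1 / (β - 2)) * ∫ p in Set.Ioi (0:ℝ) ×ˢ Set.Ioi (0:ℝ),
        ((Ioc (0:ℝ) T ×ˢ Ioc (0:ℝ) T).indicator
          (fun p : ℝ × ℝ => exp (-(κ * p.1)) * exp (-(κ * p.2)) * |p.1 - p.2| ^ (2 - β))) p)
        =ᶠ[atTop] (fun T =>
          (1 / (β - 2)) *
            ∫ u in (0:ℝ)..T, ∫ v in (0:ℝ)..T,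
              exp (-(κ * u)) * exp (-(κ * v)) * |u - v| ^ (2 - β)) := by
      filter_upwards [eventually_ge_atTop (0:ℝ)] with T hT
      have hsub : (Ioc (0:ℝ) T ×ˢ Ioc (0:ℝ) T) ⊆ (Ioi (0:ℝ) ×ˢ Ioi (0:ℝ)) :=
        prod_mono Ioc_subset_Ioi_self Ioc_subset_Ioi_self
      rw [stmt16_IocProd hβ2 hβ3 hκ hT,
        setIntegral_indicator (measurableSet_Ioc.prod measurableSet_Ioc),
        inter_eq_self_of_subset_right hsub]
    rw [← hIter]
    exact Tendsto.congr' hEq (hTend.const_mul (1 / (β - 2)))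
end

section
/- Let β ∈ (2,3). For each t ≥ 0, lim_{T→∞} (1/(β-2)) ∫_T^{T+t} ∫_T^{T+t} (|u-v|^{2-β} - (u∨v)^{2-β}) du dv = 2t^{4-β} / ((β-2)(3-β)(4-β)). More generally, for 0 ≤ s ≤ t, the limit of (1/(β-2)) ∫_T^{T+t} ∫_T^{T+s} (|u-v|^{2-β} - (u∨v)^{2-β}) du dv as T → ∞ equals (1/((β-2)(3-β)(4-β)))[s^{4-β} + t^{4-β} - (t-s)^{4-β}]. -/
open Real Set MeasureTheory Filter intervalIntegral

-- integrability of (u - v)^α and (v - u)^α in v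
lemma II_usub {α : ℝ} (hα : -1 < α) (u a b : ℝ) :
    IntervalIntegrable (fun v => (u - v) ^ α) volume a b := by
  have h := (intervalIntegrable_rpow' hα (a := u - a) (b := u - b)).comp_sub_left u
  simpa using h

lemma II_subu {α : ℝ} (hα : -1 < α) (u a b : ℝ) :
    IntervalIntegrable (fun v => (v - u) ^ α) volume a b := by
  have h := (intervalIntegrable_rpow' hα (a := a - u) (b := b - u)).comp_sub_right u
  simpa using h

lemma II_abs {α : ℝ} (hα : -1 < α) (u a b : ℝ) :
    IntervalIntegrable (fun v => |u - v| ^ α) volume a b := by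
  have H : ∀ c : ℝ, IntervalIntegrable (fun v => |u - v| ^ α) volume c u := by
    intro c
    rcases le_total c u with h | h
    · refine (II_usub hα u c u).congr ?_
      rw [uIoc_of_le h]
      intro v hv
      dsimp only
      rw [abs_of_nonneg (by linarith [hv.2])]
    · refine ((II_subu hα u u c).congr ?_).symm
      rw [uIoc_of_le h]
      intro v hv
      dsimp only
      rw [abs_of_nonpos (by linarith [hv.1]), neg_sub]
  exact (H a).trans (H b).symm

lemma inner_right {α : ℝ} (hα : -1 < α) (hα1 : α + 1 ≠ 0) {a b u : ℝ} (hbu : b ≤ u) (hab : a ≤ b) :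
    ∫ v in a..b, |u - v| ^ α = ((u - a) ^ (α + 1) - (u - b) ^ (α + 1)) / (α + 1) := by
  rw [integral_congr (g := fun v => (u - v) ^ α)
    (fun v hv => by
      rw [uIcc_of_le hab] at hv
      rw [abs_of_nonneg (by linarith [hv.2])]),
    integral_comp_sub_left (fun x => x ^ α) u, integral_rpow (Or.inl hα)]

lemma inner_mid {α : ℝ} (hα : -1 < α) (hα1 : α + 1 ≠ 0) {a b u : ℝ} (hau : a ≤ u) (hub : u ≤ b) :
    ∫ v in a..b, |u - v| ^ α = ((u - a) ^ (α + 1) + (b - u) ^ (α + 1)) / (α + 1) := by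
  rw [← integral_add_adjacent_intervals (a := a) (b := u) (c := b)
      (II_abs hα u a u) (II_abs hα u u b)]
  have h1 : ∫ v in a..u, |u - v| ^ α = ((u - a) ^ (α + 1) - (0:ℝ) ^ (α + 1)) / (α + 1) := by
    have := inner_right hα hα1 (le_refl u) hau
    simpa using this
  have h2 : ∫ v in u..b, |u - v| ^ α = ((b - u) ^ (α + 1) - (0:ℝ) ^ (α + 1)) / (α + 1) := by
    rw [integral_congr (g := fun v => (v - u) ^ α)
      (fun v hv => by
        rw [uIcc_of_le hub] at hv
        rw [abs_of_nonpos (by linarith [hv.1]), neg_sub]),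
      integral_comp_sub_right (fun x => x ^ α) u, integral_rpow (Or.inl hα)]
    simp
  rw [h1, h2, Real.zero_rpow hα1]
  ring

lemma A_int1 {α : ℝ} (hα : -1 < α) (hα0 : α < 0) {a s : ℝ} (hs : 0 ≤ s) :
    IntervalIntegrable (fun u => ∫ v in a..(a+s), |u - v| ^ α) volume a (a + s) := by
  have hα' : (-1:ℝ) < α + 1 := by linarith
  have p1 := II_subu hα' a a (a + s)
  have p2 := II_usub hα' (a + s) a (a + s)
  refine ((p1.add p2).div_const (α + 1)).congr ?_
  rw [uIoc_of_le (by linarith : a ≤ a + s)]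
  intro u hu
  dsimp only
  rw [inner_mid hα (by linarith) (le_of_lt hu.1) hu.2]

lemma A_int2 {α : ℝ} (hα : -1 < α) (hα0 : α < 0) {a s t : ℝ} (hs : 0 ≤ s) (hst : s ≤ t) :
    IntervalIntegrable (fun u => ∫ v in a..(a+s), |u - v| ^ α) volume (a + s) (a + t) := by
  have hα' : (-1:ℝ) < α + 1 := by linarith
  have p1 := II_subu hα' a (a + s) (a + t)
  have p2 := II_subu hα' (a + s) (a + s) (a + t)
  refine ((p1.sub p2).div_const (α + 1)).congr ?_
  rw [uIoc_of_le (by linarith : a + s ≤ a + t)]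
  intro u hu
  dsimp only
  rw [inner_right hα (by linarith) (le_of_lt hu.1) (by linarith : a ≤ a + s)]

lemma A_val {α : ℝ} (hα : -1 < α) (hα0 : α < 0) {a s t : ℝ} (hs : 0 ≤ s) (hst : s ≤ t) :
    ∫ u in a..(a+t), (∫ v in a..(a+s), |u - v| ^ α) =
      (s ^ (α + 2) + t ^ (α + 2) - (t - s) ^ (α + 2)) / ((α + 1) * (α + 2)) := by
  have hα' : (-1:ℝ) < α + 1 := by linarith
  have h1 : α + 1 ≠ 0 := by linarith
  have h2 : α + 2 ≠ 0 := by linarith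
  have e1 : ∫ u in a..(a+s), (u - a) ^ (α + 1) = s ^ (α + 2) / (α + 2) := by
    rw [integral_comp_sub_right (fun x => x ^ (α + 1)) a, integral_rpow (Or.inl hα')]
    rw [show a + s - a = s by ring, sub_self, Real.zero_rpow (by linarith),
      show α + 1 + 1 = α + 2 by ring]
    ring
  have e2 : ∫ u in a..(a+s), (a + s - u) ^ (α + 1) = s ^ (α + 2) / (α + 2) := by
    rw [integral_comp_sub_left (fun x => x ^ (α + 1)) (a + s), integral_rpow (Or.inl hα')]
    rw [show a + s - a = s by ring, sub_self, Real.zero_rpow (by linarith),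
      show α + 1 + 1 = α + 2 by ring]
    ring
  have e3 : ∫ u in (a+s)..(a+t), (u - a) ^ (α + 1) = (t ^ (α + 2) - s ^ (α + 2)) / (α + 2) := by
    rw [integral_comp_sub_right (fun x => x ^ (α + 1)) a, integral_rpow (Or.inl hα')]
    rw [show a + s - a = s by ring, show a + t - a = t by ring, show α + 1 + 1 = α + 2 by ring]
  have e4 : ∫ u in (a+s)..(a+t), (u - (a + s)) ^ (α + 1) = (t - s) ^ (α + 2) / (α + 2) := by
    rw [integral_comp_sub_right (fun x => x ^ (α + 1)) (a + s), integral_rpow (Or.inl hα')]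
    rw [show a + s - (a + s) = 0 by ring, show a + t - (a + s) = t - s by ring,
      Real.zero_rpow (by linarith : α + 1 + 1 ≠ 0), show α + 1 + 1 = α + 2 by ring]
    ring
  rw [← integral_add_adjacent_intervals (A_int1 hα hα0 hs) (A_int2 hα hα0 hs hst)]
  have P1 : ∫ u in a..(a+s), (∫ v in a..(a+s), |u - v| ^ α) =
      (s ^ (α + 2) / (α + 2) + s ^ (α + 2) / (α + 2)) / (α + 1) := by
    rw [integral_congr (g := fun u => ((u - a) ^ (α + 1) + (a + s - u) ^ (α + 1)) / (α + 1))
      (fun u hu => by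
        rw [uIcc_of_le (by linarith : a ≤ a + s)] at hu
        exact inner_mid hα h1 hu.1 hu.2)]
    rw [intervalIntegral.integral_div, integral_add (II_subu hα' a a (a+s)) (II_usub hα' (a+s) a (a+s)), e1, e2]
  have P2 : ∫ u in (a+s)..(a+t), (∫ v in a..(a+s), |u - v| ^ α) =
      ((t ^ (α + 2) - s ^ (α + 2)) / (α + 2) - (t - s) ^ (α + 2) / (α + 2)) / (α + 1) := by
    rw [integral_congr (g := fun u => ((u - a) ^ (α + 1) - (u - (a + s)) ^ (α + 1)) / (α + 1))
      (fun u hu => by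
        rw [uIcc_of_le (by linarith : a + s ≤ a + t)] at hu
        exact inner_right hα h1 hu.1 (by linarith : a ≤ a + s))]
    rw [intervalIntegral.integral_div, integral_sub (II_subu hα' a (a+s) (a+t)) (II_subu hα' (a+s) (a+s) (a+t)),
      e3, e4]
  rw [P1, P2]
  field_simp
  ring

lemma main_tendsto {α : ℝ} (hα : -1 < α) (hα0 : α < 0) {s t : ℝ} (hs : 0 ≤ s) (hst : s ≤ t) :
    Tendsto (fun T : ℝ => ∫ u in T..(T+t), ∫ v in T..(T+s), (|u - v| ^ α - max u v ^ α))
      atTop (nhds ((s ^ (α + 2) + t ^ (α + 2) - (t - s) ^ (α + 2)) / ((α + 1) * (α + 2)))) := by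
  have ht : 0 ≤ t := le_trans hs hst
  set C : ℝ := (s ^ (α + 2) + t ^ (α + 2) - (t - s) ^ (α + 2)) / ((α + 1) * (α + 2)) with hC
  have key : ∀ T : ℝ, 1 ≤ T →
      (∫ u in T..(T+t), ∫ v in T..(T+s), (|u - v| ^ α - max u v ^ α))
        = C - ∫ u in T..(T+t), (∫ v in T..(T+s), (max (max u v) T) ^ α) := by
    intro T hT
    have hT0 : (0:ℝ) < T := lt_of_lt_of_le one_pos hT
    have hBcont : Continuous (fun u => ∫ v in T..(T+s), (max (max u v) T) ^ α) := by
      apply continuous_parametric_intervalIntegral_of_continuous'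
        (f := fun u v => (max (max u v) T) ^ α)
      apply Continuous.rpow_const
      · exact (continuous_fst.max continuous_snd).max continuous_const
      · intro p
        exact Or.inl (ne_of_gt (lt_of_lt_of_le hT0 (le_max_right _ _)))
    have hBint : IntervalIntegrable (fun u => ∫ v in T..(T+s), (max (max u v) T) ^ α)
        volume T (T+t) := hBcont.intervalIntegrable _ _
    have hAint : IntervalIntegrable (fun u => ∫ v in T..(T+s), |u - v| ^ α)
        volume T (T+t) := (A_int1 hα hα0 hs).trans (A_int2 hα hα0 hs hst)
    have congr1 : (∫ u in T..(T+t), ∫ v in T..(T+s), (|u - v| ^ α - max u v ^ α))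
        = ∫ u in T..(T+t),
            ((∫ v in T..(T+s), |u - v| ^ α) - ∫ v in T..(T+s), (max (max u v) T) ^ α) := by
      apply integral_congr
      intro u hu
      rw [uIcc_of_le (by linarith : T ≤ T + t)] at hu
      have hTu : T ≤ u := hu.1
      have hmax : ∀ v : ℝ, max (max u v) T = max u v := fun v =>
        max_eq_left (le_trans hTu (le_max_left _ _))
      show (∫ v in T..(T+s), (|u - v| ^ α - max u v ^ α))
          = (∫ v in T..(T+s), |u - v| ^ α) - ∫ v in T..(T+s), (max (max u v) T) ^ α
      have hMint : IntervalIntegrable (fun v => max u v ^ α) volume T (T+s) := by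
        apply ContinuousOn.intervalIntegrable
        apply ContinuousOn.rpow_const (continuous_const.max continuous_id).continuousOn
        intro v _
        exact Or.inl (ne_of_gt (lt_of_lt_of_le hT0 (le_trans hTu (le_max_left _ _))))
      rw [integral_sub (II_abs hα u T (T+s)) hMint]
      congr 1
      exact integral_congr fun v _ => by rw [hmax v]
    rw [congr1, integral_sub hAint hBint, A_val hα hα0 hs hst]
  have hb : ∀ᶠ T : ℝ in atTop,
      ‖∫ u in T..(T+t), (∫ v in T..(T+s), (max (max u v) T) ^ α)‖ ≤ T ^ α * |s| * |t| := by
    filter_upwards [eventually_ge_atTop (1:ℝ)] with T hT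
    have hT0 : (0:ℝ) < T := lt_of_lt_of_le one_pos hT
    have inner : ∀ u : ℝ, ‖∫ v in T..(T+s), (max (max u v) T) ^ α‖ ≤ T ^ α * |s| := by
      intro u
      have := intervalIntegral.norm_integral_le_of_norm_le_const
        (a := T) (b := T + s) (C := T ^ α) (f := fun v => (max (max u v) T) ^ α)
        (fun v _ => by
          rw [Real.norm_eq_abs, abs_of_nonneg (Real.rpow_nonneg
            (le_trans (le_of_lt hT0) (le_max_right _ _)) _)]
          exact Real.rpow_le_rpow_of_nonpos hT0 (le_max_right _ _) (le_of_lt hα0))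
      simpa [add_sub_cancel_left] using this
    have := intervalIntegral.norm_integral_le_of_norm_le_const
      (a := T) (b := T + t) (C := T ^ α * |s|)
      (f := fun u => ∫ v in T..(T+s), (max (max u v) T) ^ α)
      (fun u _ => inner u)
    simpa [add_sub_cancel_left] using this
  have hzero : Tendsto (fun T : ℝ => T ^ α * |s| * |t|) atTop (nhds 0) := by
    have h1 : Tendsto (fun T : ℝ => T ^ α) atTop (nhds 0) := by
      have := tendsto_rpow_neg_atTop (y := -α) (by linarith)
      simpa [neg_neg] using this
    simpa using (h1.mul_const |s|).mul_const |t|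
  have hE : Tendsto (fun T : ℝ =>
      ∫ u in T..(T+t), (∫ v in T..(T+s), (max (max u v) T) ^ α)) atTop (nhds 0) :=
    squeeze_zero_norm' hb hzero
  have hfin := tendsto_const_nhds (x := C) (f := atTop (α := ℝ)) |>.sub hE
  rw [sub_zero] at hfin
  apply hfin.congr'
  filter_upwards [eventually_ge_atTop (1:ℝ)] with T hT
  exact (key T hT).symm

theorem stmt_18 (β : ℝ) (hβ : β ∈ Set.Ioo (2:ℝ) 3) :
    (∀ t ≥ (0:ℝ),
      Tendsto (fun T : ℝ =>
          (1 / (β - 2)) *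
            ∫ u in T..(T + t), ∫ v in T..(T + t),
              (|u - v| ^ (2 - β) - (max u v) ^ (2 - β)))
        atTop (nhds (2 * t ^ (4 - β) / ((β - 2) * (3 - β) * (4 - β))))) ∧
    (∀ s t : ℝ, 0 ≤ s → s ≤ t →
      Tendsto (fun T : ℝ =>
          (1 / (β - 2)) *
            ∫ u in T..(T + t), ∫ v in T..(T + s),
              (|u - v| ^ (2 - β) - (max u v) ^ (2 - β)))
        atTop
        (nhds ((1 / ((β - 2) * (3 - β) * (4 - β))) *
          (s ^ (4 - β) + t ^ (4 - β) - (t - s) ^ (4 - β))))) := by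
  obtain ⟨hβ2, hβ3⟩ := hβ
  have hα : (-1:ℝ) < 2 - β := by linarith
  have hα0 : 2 - β < 0 := by linarith
  have h42 : 2 - β + 2 = 4 - β := by ring
  have h31 : 2 - β + 1 = 3 - β := by ring
  have hne2 : β - 2 ≠ 0 := by intro h; linarith [eq_of_sub_eq_zero h]
  have hne3 : 3 - β ≠ 0 := by intro h; linarith [eq_of_sub_eq_zero h]
  have hne4 : 4 - β ≠ 0 := by intro h; linarith [eq_of_sub_eq_zero h]
  have P2 : ∀ s t : ℝ, 0 ≤ s → s ≤ t →
      Tendsto (fun T : ℝ =>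
          (1 / (β - 2)) *
            ∫ u in T..(T + t), ∫ v in T..(T + s),
              (|u - v| ^ (2 - β) - (max u v) ^ (2 - β)))
        atTop
        (nhds ((1 / ((β - 2) * (3 - β) * (4 - β))) *
          (s ^ (4 - β) + t ^ (4 - β) - (t - s) ^ (4 - β)))) := by
    intro s t hs hst
    have main := main_tendsto hα hα0 hs hst
    rw [h42, h31] at main
    have := main.const_mul (1 / (β - 2))
    convert this using 2
    rw [div_mul_eq_mul_div, one_mul, div_mul_eq_mul_div, one_mul, div_div]
    ring_nf
  refine ⟨?_, P2⟩
  intro t ht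
  have := P2 t t ht le_rfl
  convert this using 2
  rw [sub_self, Real.zero_rpow hne4]
  field_simp
  ring
end

section
/- Let β ∈ (2,3) and κ > 0. For every t ≥ 0, lim_{T→∞} (e^{-κT}/(β-2)) ∫₀^T ∫_T^{T+t} e^{κv} ((u-v)^{2-β} - u^{2-β}) du dv = (1/(β-2)) ∫₀^t ∫₀^∞ e^{-κv} (u+v)^{2-β} dv du, where in the inner integral u ranges over (T, T+t] and v over [0,T] so that u - v > 0. -/
open Real Set MeasureTheory Filter

private lemma myq (c t v : ℝ) (hc : -1 < c) :
    ∫ u in (0:ℝ)..t, (u + v) ^ c = ((t + v) ^ (c+1) - v ^ (c+1)) / (c+1) := by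
  have h := intervalIntegral.integral_comp_add_right (a := 0) (b := t)
      (fun x : ℝ => x ^ c) v
  rw [h, integral_rpow (Or.inl hc)]
  norm_num

private lemma myii (c t v : ℝ) (hc : -1 < c) :
    IntervalIntegrable (fun u => (u + v) ^ c) volume 0 t := by
  have h := (intervalIntegral.intervalIntegrable_rpow' (a := v) (b := t + v) hc).comp_add_right v
  simpa using h

private lemma myint (c κ t : ℝ) (hc1 : -1 < c) (hc0 : c < 0) (hκ : 0 < κ) (ht : 0 ≤ t) :
    IntegrableOn (fun v => exp (-(κ*v)) * (((t + v) ^ (c+1) - v ^ (c+1)) / (c+1)))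
      (Set.Ioi (0:ℝ)) := by
  have hc1' : 0 < c + 1 := by linarith
  have hcont : Continuous fun v : ℝ => exp (-(κ*v)) * (((t + v) ^ (c+1) - v ^ (c+1)) / (c+1)) := by
    have h1 : Continuous fun v : ℝ => v ^ (c+1) := Real.continuous_rpow_const hc1'.le
    have h2 : Continuous fun v : ℝ => (t + v) ^ (c+1) :=
      (continuous_const.add continuous_id).rpow_const fun x => Or.inr hc1'.le
    exact (Real.continuous_exp.comp (continuous_const.mul continuous_id).neg).mul
      ((h2.sub h1).div_const _)
  have hg : IntegrableOn (fun v => (t^(c+1)/(c+1)) * exp (-(κ*v))) (Set.Ioi (0:ℝ)) := by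
    have h := (exp_neg_integrableOn_Ioi 0 hκ).const_mul (t^(c+1)/(c+1))
    simpa [neg_mul, IntegrableOn] using h
  have h0 : ∀ᵐ u : ℝ ∂(volume.restrict (Set.Icc (0:ℝ) t)), u ≠ 0 := by
    refine ae_restrict_of_ae ?_
    rw [ae_iff]
    simp only [not_not, Set.setOf_eq_eq_singleton]
    exact Real.volume_singleton
  refine Integrable.mono hg hcont.aestronglyMeasurable ?_
  filter_upwards [ae_restrict_mem measurableSet_Ioi] with v hv
  have hv0 : (0:ℝ) < v := hv
  have hqe : ((t + v) ^ (c+1) - v ^ (c+1)) / (c+1) = ∫ u in (0:ℝ)..t, (u + v) ^ c :=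
    (myq c t v hc1).symm
  have hq0 : 0 ≤ ∫ u in (0:ℝ)..t, (u + v) ^ c :=
    intervalIntegral.integral_nonneg ht fun u hu => Real.rpow_nonneg (by linarith [hu.1]) _
  have hqle : (∫ u in (0:ℝ)..t, (u + v) ^ c) ≤ t^(c+1)/(c+1) := by
    have hmono : (∫ u in (0:ℝ)..t, (u + v) ^ c) ≤ ∫ u in (0:ℝ)..t, u ^ c := by
      refine intervalIntegral.integral_mono_ae_restrict ht (myii c t v hc1)
        (intervalIntegral.intervalIntegrable_rpow' hc1) ?_
      filter_upwards [ae_restrict_mem measurableSet_Icc, h0] with u hu hu0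
      exact Real.rpow_le_rpow_of_nonpos (lt_of_le_of_ne hu.1 (Ne.symm hu0))
        (by linarith) hc0.le
    have : (∫ u in (0:ℝ)..t, u ^ c) = t^(c+1)/(c+1) := by
      rw [integral_rpow (Or.inl hc1), Real.zero_rpow hc1'.ne', sub_zero]
    linarith
  have hb0 : 0 ≤ t^(c+1)/(c+1) := div_nonneg (Real.rpow_nonneg ht _) hc1'.le
  rw [Real.norm_eq_abs, Real.norm_eq_abs, abs_of_nonneg, abs_of_nonneg]
  · rw [hqe, mul_comm]
    exact mul_le_mul_of_nonneg_right (hqe ▸ hqle) (Real.exp_nonneg _)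
  · positivity
  · rw [hqe]
    exact mul_nonneg (Real.exp_nonneg _) hq0

private lemma myswap (c κ t : ℝ) (hc1 : -1 < c) (hc0 : c < 0) (hκ : 0 < κ) (ht : 0 ≤ t) :
    ∫ v in Set.Ioi (0:ℝ), exp (-(κ*v)) * (((t + v) ^ (c+1) - v ^ (c+1)) / (c+1))
      = ∫ u in (0:ℝ)..t, ∫ v in Set.Ioi (0:ℝ), exp (-(κ*v)) * (u + v) ^ c := by
  have hfs : ∀ v ∈ Set.Ioi (0:ℝ),
      exp (-(κ*v)) * (((t + v) ^ (c+1) - v ^ (c+1)) / (c+1))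
        = ∫ u in Set.Ioc (0:ℝ) t, exp (-(κ*v)) * (u + v) ^ c := by
    intro v _
    rw [← intervalIntegral.integral_of_le ht, intervalIntegral.integral_const_mul,
      myq c t v hc1]
  have hS : MeasurableSet (Set.Ioi (0:ℝ) ×ˢ Set.Ioc (0:ℝ) t) :=
    measurableSet_Ioi.prod measurableSet_Ioc
  have hcontOn : ContinuousOn (fun p : ℝ × ℝ => exp (-(κ*p.1)) * (p.2 + p.1) ^ c)
      (Set.Ioi (0:ℝ) ×ˢ Set.Ioc (0:ℝ) t) := by
    refine ContinuousOn.mul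
      (Real.continuous_exp.comp (continuous_const.mul continuous_fst).neg).continuousOn ?_
    refine ContinuousOn.rpow_const (continuous_snd.add continuous_fst).continuousOn ?_
    rintro ⟨v, u⟩ hp
    have h1 : (0:ℝ) < v := hp.1
    have h2 : (0:ℝ) < u := hp.2.1
    exact Or.inl (by dsimp; linarith)
  have hASM : AEStronglyMeasurable (Function.uncurry fun v u => exp (-(κ*v)) * (u + v) ^ c)
      ((volume.restrict (Set.Ioi (0:ℝ))).prod (volume.restrict (Set.Ioc (0:ℝ) t))) := by
    rw [Measure.prod_restrict]
    exact hcontOn.aestronglyMeasurable hS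
  have hint : Integrable (Function.uncurry fun v u => exp (-(κ*v)) * (u + v) ^ c)
      ((volume.restrict (Set.Ioi (0:ℝ))).prod (volume.restrict (Set.Ioc (0:ℝ) t))) := by
    rw [integrable_prod_iff hASM]
    constructor
    · filter_upwards [ae_restrict_mem measurableSet_Ioi] with v _
      have h := (myii c t v hc1).const_mul (exp (-(κ*v)))
      exact (intervalIntegrable_iff_integrableOn_Ioc_of_le ht).mp h
    · refine (myint c κ t hc1 hc0 hκ ht).congr ?_
      filter_upwards [ae_restrict_mem measurableSet_Ioi] with v hv
      have hv0 : (0:ℝ) < v := hv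
      rw [hfs v hv]
      refine setIntegral_congr_fun measurableSet_Ioc fun u hu => ?_
      rw [Function.uncurry_apply_pair, Real.norm_eq_abs, abs_of_nonneg]
      exact mul_nonneg (Real.exp_nonneg _) (Real.rpow_nonneg (by linarith [hu.1]) _)
  rw [setIntegral_congr_fun measurableSet_Ioi hfs, integral_integral_swap hint,
    intervalIntegral.integral_of_le ht]

theorem stmt_19 (β κ t : ℝ) (hβ : β ∈ Set.Ioo (2:ℝ) 3) (hκ : 0 < κ)
    (ht : 0 ≤ t) :
    Tendsto (fun T : ℝ =>
        (exp (-(κ * T)) / (β - 2)) *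
          ∫ v in (0:ℝ)..T, ∫ u in T..(T + t),
            exp (κ * v) * ((u - v) ^ (2 - β) - u ^ (2 - β)))
      atTop
      (nhds ((1 / (β - 2)) *
        ∫ u in (0:ℝ)..t, ∫ v in Set.Ioi (0:ℝ),
          exp (-(κ * v)) * (u + v) ^ (2 - β))) := by
  obtain ⟨hβ2, hβ3⟩ := hβ
  have hc1 : (-1:ℝ) < 2 - β := by linarith
  have hc0 : (2:ℝ) - β < 0 := by linarith
  have hc1' : (0:ℝ) < 2 - β + 1 := by linarith
  -- interval integrability of u ↦ (T+u)^(2-β)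
  have hiT : ∀ T : ℝ, IntervalIntegrable (fun u => (T + u) ^ (2-β)) volume 0 t := by
    intro T
    have h := myii (2-β) t T hc1
    rwa [show (fun u:ℝ => (u + T) ^ (2-β)) = fun u => (T + u) ^ (2-β) from
      funext fun u => by rw [add_comm]] at h
  have hexpcont : Continuous fun v : ℝ => exp (-(κ*v)) :=
    Real.continuous_exp.comp (continuous_const.mul continuous_id).neg
  have hQcont : Continuous fun v : ℝ =>
      exp (-(κ*v)) * (((t + v) ^ (2-β+1) - v ^ (2-β+1)) / (2-β+1)) := by
    have h1 : Continuous fun v : ℝ => v ^ (2-β+1) := Real.continuous_rpow_const hc1'.le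
    have h2 : Continuous fun v : ℝ => (t + v) ^ (2-β+1) :=
      (continuous_const.add continuous_id).rpow_const fun x => Or.inr hc1'.le
    exact hexpcont.mul ((h2.sub h1).div_const _)
  -- key identity
  have hmain : ∀ T : ℝ, 0 ≤ T →
      (exp (-(κ * T)) / (β - 2)) * (∫ v in (0:ℝ)..T, ∫ u in T..(T + t),
          exp (κ * v) * ((u - v) ^ (2 - β) - u ^ (2 - β)))
        = (1/(β-2)) * ((∫ v in (0:ℝ)..T,
              exp (-(κ*v)) * (((t + v) ^ (2-β+1) - v ^ (2-β+1)) / (2-β+1)))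
            - (∫ v in (0:ℝ)..T, exp (-(κ*v))) * (∫ u in (0:ℝ)..t, (T + u) ^ (2-β))) := by
    intro T hT
    have step1 : (∫ v in (0:ℝ)..T, ∫ u in T..(T+t),
          exp (κ*v) * ((u-v) ^ (2-β) - u ^ (2-β)))
        = ∫ v in (0:ℝ)..T, ∫ u in T..(T+t),
            exp (κ*(T-v)) * ((u-(T-v)) ^ (2-β) - u ^ (2-β)) := by
      have h := intervalIntegral.integral_comp_sub_left (a := 0) (b := T)
        (fun v => ∫ u in T..(T+t), exp (κ*v) * ((u-v) ^ (2-β) - u ^ (2-β))) T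
      simpa using h.symm
    have hinner : ∀ v : ℝ, (∫ u in T..(T+t),
          exp (κ*(T-v)) * ((u-(T-v)) ^ (2-β) - u ^ (2-β)))
        = exp (κ*(T-v)) * ((((t + v) ^ (2-β+1) - v ^ (2-β+1)) / (2-β+1))
            - ∫ u in (0:ℝ)..t, (T + u) ^ (2-β)) := by
      intro v
      have h := intervalIntegral.integral_comp_add_left (a := 0) (b := t)
          (fun u => exp (κ*(T-v)) * ((u-(T-v)) ^ (2-β) - u ^ (2-β))) T
      rw [add_zero] at h
      rw [← h]
      have e1 : ∀ u : ℝ, T + u - (T - v) = u + v := fun u => by ring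
      simp only [e1]
      rw [intervalIntegral.integral_const_mul,
        intervalIntegral.integral_sub (myii (2-β) t v hc1) (hiT T), myq (2-β) t v hc1]
    have step2 : (∫ v in (0:ℝ)..T, ∫ u in T..(T+t),
          exp (κ*(T-v)) * ((u-(T-v)) ^ (2-β) - u ^ (2-β)))
        = ∫ v in (0:ℝ)..T, exp (κ*(T-v)) * ((((t + v) ^ (2-β+1) - v ^ (2-β+1)) / (2-β+1))
            - ∫ u in (0:ℝ)..t, (T + u) ^ (2-β)) :=
      intervalIntegral.integral_congr fun v _ => hinner v
    have step3 : exp (-(κ*T)) * (∫ v in (0:ℝ)..T,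
          exp (κ*(T-v)) * ((((t + v) ^ (2-β+1) - v ^ (2-β+1)) / (2-β+1))
            - ∫ u in (0:ℝ)..t, (T + u) ^ (2-β)))
        = ∫ v in (0:ℝ)..T, exp (-(κ*v)) * ((((t + v) ^ (2-β+1) - v ^ (2-β+1)) / (2-β+1))
            - ∫ u in (0:ℝ)..t, (T + u) ^ (2-β)) := by
      rw [← intervalIntegral.integral_const_mul]
      refine intervalIntegral.integral_congr fun v _ => ?_
      rw [← mul_assoc, ← Real.exp_add]
      have e2 : -(κ*T) + κ*(T-v) = -(κ*v) := by ring
      rw [e2]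
    have step4 : (∫ v in (0:ℝ)..T,
          exp (-(κ*v)) * ((((t + v) ^ (2-β+1) - v ^ (2-β+1)) / (2-β+1))
            - ∫ u in (0:ℝ)..t, (T + u) ^ (2-β)))
        = (∫ v in (0:ℝ)..T,
              exp (-(κ*v)) * (((t + v) ^ (2-β+1) - v ^ (2-β+1)) / (2-β+1)))
            - (∫ v in (0:ℝ)..T, exp (-(κ*v))) * (∫ u in (0:ℝ)..t, (T + u) ^ (2-β)) := by
      simp only [mul_sub]
      rw [intervalIntegral.integral_sub (hQcont.intervalIntegrable 0 T)
        ((hexpcont.intervalIntegrable 0 T).mul_const _),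
        intervalIntegral.integral_mul_const]
    rw [step1, step2, show (exp (-(κ * T)) / (β - 2)) = (1/(β-2)) * exp (-(κ*T)) by ring,
      mul_assoc, step3, step4]
  -- limits
  have hA : Tendsto (fun T => ∫ v in (0:ℝ)..T,
        exp (-(κ*v)) * (((t + v) ^ (2-β+1) - v ^ (2-β+1)) / (2-β+1))) atTop
      (nhds (∫ v in Set.Ioi (0:ℝ),
        exp (-(κ*v)) * (((t + v) ^ (2-β+1) - v ^ (2-β+1)) / (2-β+1)))) :=
    intervalIntegral_tendsto_integral_Ioi 0 (myint (2-β) κ t hc1 hc0 hκ ht) tendsto_id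
  have hexp : ∀ T : ℝ, ∫ v in (0:ℝ)..T, exp (-(κ*v)) = (1 - exp (-(κ*T)))/κ := by
    intro T
    have h := intervalIntegral.integral_comp_mul_left (a := 0) (b := T) (f := Real.exp)
      (c := -κ) (by simpa using hκ.ne')
    simp only [neg_mul] at h ⊢
    rw [h, integral_exp]
    simp only [mul_zero, neg_zero, Real.exp_zero, smul_eq_mul]
    rw [eq_div_iff hκ.ne']
    field_simp
    ring
  have hB : Tendsto (fun T => (∫ v in (0:ℝ)..T, exp (-(κ*v)))
        * (∫ u in (0:ℝ)..t, (T + u) ^ (2-β))) atTop (nhds 0) := by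
    refine squeeze_zero' (g := fun T : ℝ => (1/κ) * (t * T ^ (2-β))) ?_ ?_ ?_
    · filter_upwards [eventually_ge_atTop (0:ℝ)] with T hT
      exact mul_nonneg
        (intervalIntegral.integral_nonneg hT fun v _ => Real.exp_nonneg _)
        (intervalIntegral.integral_nonneg ht fun u hu =>
          Real.rpow_nonneg (by linarith [hu.1]) _)
    · filter_upwards [eventually_ge_atTop (1:ℝ)] with T hT
      have hT0 : (0:ℝ) < T := by linarith
      have h1 : (∫ v in (0:ℝ)..T, exp (-(κ*v))) ≤ 1/κ := by
        rw [hexp T]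
        have := Real.exp_nonneg (-(κ*T))
        gcongr
        linarith
      have h2 : (∫ u in (0:ℝ)..t, (T + u) ^ (2-β)) ≤ t * T ^ (2-β) := by
        have h := intervalIntegral.integral_mono_on ht (hiT T) intervalIntegrable_const
          (fun u hu => Real.rpow_le_rpow_of_nonpos hT0 (by linarith [hu.1]) hc0.le)
        simpa [intervalIntegral.integral_const, smul_eq_mul] using h
      exact mul_le_mul h1 h2
        (intervalIntegral.integral_nonneg ht fun u hu =>
          Real.rpow_nonneg (by linarith [hu.1]) _)
        (by positivity)
    · have h : Tendsto (fun T : ℝ => T ^ (2-β)) atTop (nhds 0) := by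
        have := tendsto_rpow_neg_atTop (show (0:ℝ) < β - 2 by linarith)
        simpa [neg_sub] using this
      have h' := ((h.const_mul t).const_mul (1/κ))
      simpa using h'
  have hLim := (hA.sub hB).const_mul (1/(β-2))
  rw [sub_zero, myswap (2-β) κ t hc1 hc0 hκ ht] at hLim
  refine Tendsto.congr' ?_ hLim
  filter_upwards [eventually_ge_atTop (0:ℝ)] with T hT
  exact (hmain T hT).symm
end
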